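/- arXiv:1101.4320 — 6 statements merged into one kernel-verified Lean document; each statement's English description precedes it below -/
import Mathlib

section
/- Let E be a complex normed space and let ‖·‖ be a c₀-norm on the algebraic tensor product c₀ ⊗ E. Then ‖·‖ is a reasonable cross-norm; that is: (i) ‖a ⊗ x‖ = ‖a‖_{c₀}‖x‖ for every a ∈ c₀ and x ∈ E; (ii) for every τ ∈ c₀ ⊗ E and every representation τ = Σ_{j=1}^{k} a_j ⊗ x_j one has ‖τ‖ ≤ Σ_{j=1}^{k} ‖a_j‖‖x_j‖ (so ‖·‖ is dominated by the projective tensor norm); and (iii) for every λ ∈ (c₀)' and μ ∈ E' and every τ = Σ_{j=1}^{k} a_j ⊗ x_j ∈ c₀ ⊗ E one has |Σ_{j=1}^{k} λ(a_j)μ(x_j)| ≤ ‖λ‖‖μ‖‖τ‖ (so ‖·‖ dominates the injective tensor norm). -/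
/-!
Only rank-one operators `a ↦ λ(a) g` are needed. Applied to `δ₀ ⊗ x` with `λ(δ₀) = 1`, such an
operator gives `a ⊗ x`, whence `‖a ⊗ x‖ ≤ ‖a‖ ‖x‖`; applied to `τ` with `g = δ₀`, it gives
`δ₀ ⊗ (λ ⊗ id)(τ)`, whence `‖(λ ⊗ id)(τ)‖ ≤ ‖λ‖ ‖τ‖`. Composing with `μ ∈ E'` yields the injective
lower bound, and a Hahn–Banach norming functional `λ` of `a` yields `‖a‖ ‖x‖ ≤ ‖a ⊗ x‖`. The
projective bound is then the triangle inequality.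
-/

open ZeroAtInfty NormedSpace TensorProduct

/-- The standard basis vector `δₙ` of `c₀ = C₀(ℕ, ℂ)`. -/
noncomputable def c0delta (n : ℕ) : C₀(ℕ, ℂ) :=
  ⟨⟨fun m => if m = n then 1 else 0, continuous_of_discreteTopology⟩, by
    simp only [ContinuousMap.coe_mk]
    rw [Filter.cocompact_eq_cofinite ℕ]
    apply Filter.Tendsto.congr' (f₁ := fun _ => (0 : ℂ))
    · rw [Filter.eventuallyEq_iff_exists_mem]
      exact ⟨{m | m ≠ n}, by simp [Filter.mem_cofinite], fun m hm => (if_neg hm).symm⟩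
    · exact tendsto_const_nhds⟩

lemma norm_c0delta (n : ℕ) : ‖c0delta n‖ = 1 := by
  have h_apply (m : ℕ) : ‖(c0delta n).toBCF m‖ = if m = n then 1 else 0 := by
    change ‖if m = n then (1 : ℂ) else 0‖ = _
    split_ifs <;> simp
  rw [← ZeroAtInftyContinuousMap.norm_toBCF_eq_norm]
  refine le_antisymm ((BoundedContinuousFunction.norm_le zero_le_one).mpr fun m => ?_) ?_
  · rw [h_apply]
    split_ifs <;> norm_num
  · have h_le := BoundedContinuousFunction.norm_coe_le_norm (c0delta n).toBCF n
    rwa [h_apply, if_pos rfl] at h_le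

lemma ContinuousLinearMap.isCompactOperator_smulRight {𝕜 M F : Type*} [NormedField 𝕜]
    [TopologicalSpace M] [AddCommGroup M] [Module 𝕜 M]
    [AddCommGroup F] [Module 𝕜 F] [TopologicalSpace F] [ContinuousSMul 𝕜 F]
    [LocallyCompactSpace 𝕜] (lam : M →L[𝕜] 𝕜) (g : F) :
    IsCompactOperator (lam.smulRight g) :=
  (isCompactOperator_of_locallyCompactSpace_rng ((1 : 𝕜 →L[𝕜] 𝕜).smulRight g)).comp_clm lam

lemma TensorProduct.map_smulRight_id_apply {R M M' N : Type*} [CommSemiring R]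
    [AddCommMonoid M] [Module R M] [AddCommMonoid M'] [Module R M']
    [AddCommMonoid N] [Module R N] (f : M →ₗ[R] R) (g : M') (τ : M ⊗[R] N) :
    map (f.smulRight g) LinearMap.id τ = g ⊗ₜ[R] TensorProduct.lid R N (f.rTensor N τ) := by
  induction τ using TensorProduct.induction_on with
  | zero => simp
  | tmul a x => simp [TensorProduct.smul_tmul]
  | add σ τ hσ hτ => simp only [map_add, hσ, hτ, tmul_add]

structure IsC0Seminorm {E : Type*} [NormedAddCommGroup E] [NormedSpace ℂ E]
    (p : Seminorm ℂ (C₀(ℕ, ℂ) ⊗[ℂ] E)) : Prop where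
  delta_tmul : ∀ x : E, p (c0delta 0 ⊗ₜ[ℂ] x) = ‖x‖
  map_le : ∀ T : C₀(ℕ, ℂ) →L[ℂ] C₀(ℕ, ℂ), IsCompactOperator T →
    ∀ τ, p (map (T : C₀(ℕ, ℂ) →ₗ[ℂ] C₀(ℕ, ℂ)) LinearMap.id τ) ≤ ‖T‖ * p τ

namespace IsC0Seminorm

variable {E : Type*} [NormedAddCommGroup E] [NormedSpace ℂ E]
  {p : Seminorm ℂ (C₀(ℕ, ℂ) ⊗[ℂ] E)} (hp : IsC0Seminorm p)
include hp

lemma map_smulRight_le (lam : StrongDual ℂ C₀(ℕ, ℂ)) (g : C₀(ℕ, ℂ))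
    (τ : C₀(ℕ, ℂ) ⊗[ℂ] E) :
    p (map (lam.smulRight g : C₀(ℕ, ℂ) →ₗ[ℂ] C₀(ℕ, ℂ)) LinearMap.id τ) ≤ ‖lam‖ * ‖g‖ * p τ := by
  simpa [ContinuousLinearMap.norm_smulRight_apply] using
    hp.map_le _ (lam.isCompactOperator_smulRight g) τ

lemma norm_lid_rTensor_le (lam : StrongDual ℂ C₀(ℕ, ℂ)) (τ : C₀(ℕ, ℂ) ⊗[ℂ] E) :
    ‖TensorProduct.lid ℂ E ((lam : C₀(ℕ, ℂ) →ₗ[ℂ] ℂ).rTensor E τ)‖ ≤ ‖lam‖ * p τ := by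
  simpa [ContinuousLinearMap.coe_smulRight, map_smulRight_id_apply, hp.delta_tmul,
    norm_c0delta] using hp.map_smulRight_le lam (c0delta 0) τ

lemma tmul_le (a : C₀(ℕ, ℂ)) (x : E) : p (a ⊗ₜ[ℂ] x) ≤ ‖a‖ * ‖x‖ := by
  obtain ⟨lam, hlam_norm, hlam_delta⟩ := exists_dual_vector'' ℂ (c0delta 0)
  rw [norm_c0delta] at hlam_delta
  have h_map : map (lam.smulRight a : C₀(ℕ, ℂ) →ₗ[ℂ] C₀(ℕ, ℂ)) LinearMap.id
      (c0delta 0 ⊗ₜ[ℂ] x) = a ⊗ₜ[ℂ] x := by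
    simp [hlam_delta]
  calc p (a ⊗ₜ[ℂ] x) ≤ ‖lam‖ * ‖a‖ * ‖x‖ := by
        have h_le := hp.map_smulRight_le lam a (c0delta 0 ⊗ₜ[ℂ] x)
        rwa [h_map, hp.delta_tmul] at h_le
    _ ≤ ‖a‖ * ‖x‖ := by
        rw [mul_assoc]
        exact mul_le_of_le_one_left (by positivity) hlam_norm

lemma le_tmul (a : C₀(ℕ, ℂ)) (x : E) : ‖a‖ * ‖x‖ ≤ p (a ⊗ₜ[ℂ] x) := by
  obtain ⟨lam, hlam_norm, hlam_a⟩ := exists_dual_vector'' ℂ a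
  have h := hp.norm_lid_rTensor_le lam (a ⊗ₜ[ℂ] x)
  simp only [LinearMap.rTensor_tmul, lid_tmul, ContinuousLinearMap.coe_coe, hlam_a,
    norm_smul, RCLike.norm_ofReal, abs_norm] at h
  exact h.trans (mul_le_of_le_one_left (apply_nonneg p _) hlam_norm)

lemma apply_tmul (a : C₀(ℕ, ℂ)) (x : E) : p (a ⊗ₜ[ℂ] x) = ‖a‖ * ‖x‖ :=
  le_antisymm (hp.tmul_le a x) (hp.le_tmul a x)

lemma sum_tmul_le {ι : Type*} (s : Finset ι) (a : ι → C₀(ℕ, ℂ)) (x : ι → E) :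
    p (∑ j ∈ s, a j ⊗ₜ[ℂ] x j) ≤ ∑ j ∈ s, ‖a j‖ * ‖x j‖ := by
  calc p (∑ j ∈ s, a j ⊗ₜ[ℂ] x j) ≤ ∑ j ∈ s, p (a j ⊗ₜ[ℂ] x j) :=
        Finset.le_sum_of_subadditive p (map_zero p).le (map_add_le_add p) s _
    _ = ∑ j ∈ s, ‖a j‖ * ‖x j‖ := Finset.sum_congr rfl fun j _ => hp.apply_tmul (a j) (x j)

lemma norm_sum_apply_mul_apply_le (lam : StrongDual ℂ C₀(ℕ, ℂ)) (mu : StrongDual ℂ E)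
    {ι : Type*} (s : Finset ι) (a : ι → C₀(ℕ, ℂ)) (x : ι → E) :
    ‖∑ j ∈ s, lam (a j) * mu (x j)‖ ≤ ‖lam‖ * ‖mu‖ * p (∑ j ∈ s, a j ⊗ₜ[ℂ] x j) := by
  have h_slice : TensorProduct.lid ℂ E ((lam : C₀(ℕ, ℂ) →ₗ[ℂ] ℂ).rTensor E
      (∑ j ∈ s, a j ⊗ₜ[ℂ] x j)) = ∑ j ∈ s, lam (a j) • x j := by
    simp
  have h_sum : ∑ j ∈ s, lam (a j) * mu (x j) = mu (∑ j ∈ s, lam (a j) • x j) := by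
    simp
  calc ‖∑ j ∈ s, lam (a j) * mu (x j)‖ ≤ ‖mu‖ * ‖∑ j ∈ s, lam (a j) • x j‖ :=
        h_sum ▸ mu.le_opNorm _
    _ ≤ ‖mu‖ * (‖lam‖ * p (∑ j ∈ s, a j ⊗ₜ[ℂ] x j)) :=
        mul_le_mul_of_nonneg_left (h_slice ▸ hp.norm_lid_rTensor_le lam _) (norm_nonneg mu)
    _ = ‖lam‖ * ‖mu‖ * p (∑ j ∈ s, a j ⊗ₜ[ℂ] x j) := by ring

end IsC0Seminorm

theorem c0_norm_is_reasonable_cross_norm_general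
    (E : Type*) [NormedAddCommGroup E] [NormedSpace ℂ E]
    (N : TensorProduct ℂ C₀(ℕ, ℂ) E → ℝ)
    (N_add : ∀ τ σ, N (τ + σ) ≤ N τ + N σ)
    (N_smul : ∀ (c : ℂ) τ, N (c • τ) = ‖c‖ * N τ)
    -- `N` is a `c₀`-norm:
    (N_delta : ∀ x : E, N (c0delta 0 ⊗ₜ[ℂ] x) = ‖x‖)
    (N_compact : ∀ T : C₀(ℕ, ℂ) →L[ℂ] C₀(ℕ, ℂ), IsCompactOperator T →
      ∀ τ, N (TensorProduct.map (T : C₀(ℕ, ℂ) →ₗ[ℂ] C₀(ℕ, ℂ)) (LinearMap.id) τ) ≤ ‖T‖ * N τ) :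
    -- (i) cross-norm:
    (∀ (a : C₀(ℕ, ℂ)) (x : E), N (a ⊗ₜ[ℂ] x) = ‖a‖ * ‖x‖) ∧
    -- (ii) dominated by the projective tensor norm:
    (∀ (k : ℕ) (a : Fin k → C₀(ℕ, ℂ)) (x : Fin k → E),
      N (∑ j, a j ⊗ₜ[ℂ] x j) ≤ ∑ j, ‖a j‖ * ‖x j‖) ∧
    -- (iii) dominates the injective tensor norm (reasonableness):
    (∀ (lam : StrongDual ℂ C₀(ℕ, ℂ)) (mu : StrongDual ℂ E) (k : ℕ)
      (a : Fin k → C₀(ℕ, ℂ)) (x : Fin k → E),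
      ‖∑ j, lam (a j) * mu (x j)‖ ≤ ‖lam‖ * ‖mu‖ * N (∑ j, a j ⊗ₜ[ℂ] x j)) := by
  let p : Seminorm ℂ (C₀(ℕ, ℂ) ⊗[ℂ] E) := Seminorm.of N N_add N_smul
  have hp : IsC0Seminorm p := ⟨N_delta, N_compact⟩
  exact ⟨hp.apply_tmul, fun _ => hp.sum_tmul_le _,
    fun lam mu _ => hp.norm_sum_apply_mul_apply_le lam mu _⟩

/-- every `c₀`-norm `N` on `c₀ ⊗ E` is a reasonable cross-norm:
(i) `N (a ⊗ x) = ‖a‖ ‖x‖`; (ii) `N` is dominated by the projective tensor norm;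
(iii) `N` dominates the injective tensor norm. -/
theorem c0_norm_is_reasonable_cross_norm
    (E : Type*) [NormedAddCommGroup E] [NormedSpace ℂ E]
    (N : TensorProduct ℂ C₀(ℕ, ℂ) E → ℝ)
    -- `N` is a norm:
    (N_eq_zero : ∀ τ, N τ = 0 ↔ τ = 0)
    (N_add : ∀ τ σ, N (τ + σ) ≤ N τ + N σ)
    (N_smul : ∀ (c : ℂ) τ, N (c • τ) = ‖c‖ * N τ)
    -- `N` is a `c₀`-norm:
    (N_delta : ∀ x : E, N (c0delta 0 ⊗ₜ[ℂ] x) = ‖x‖)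
    (N_compact : ∀ T : C₀(ℕ, ℂ) →L[ℂ] C₀(ℕ, ℂ), IsCompactOperator T →
      ∀ τ, N (TensorProduct.map (T : C₀(ℕ, ℂ) →ₗ[ℂ] C₀(ℕ, ℂ)) (LinearMap.id) τ) ≤ ‖T‖ * N τ) :
    -- (i) cross-norm:
    (∀ (a : C₀(ℕ, ℂ)) (x : E), N (a ⊗ₜ[ℂ] x) = ‖a‖ * ‖x‖) ∧
    -- (ii) dominated by the projective tensor norm:
    (∀ (k : ℕ) (a : Fin k → C₀(ℕ, ℂ)) (x : Fin k → E),
      N (∑ j, a j ⊗ₜ[ℂ] x j) ≤ ∑ j, ‖a j‖ * ‖x j‖) ∧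
    -- (iii) dominates the injective tensor norm (reasonableness):
    (∀ (lam : StrongDual ℂ C₀(ℕ, ℂ)) (mu : StrongDual ℂ E) (k : ℕ)
      (a : Fin k → C₀(ℕ, ℂ)) (x : Fin k → E),
      ‖∑ j, lam (a j) * mu (x j)‖ ≤ ‖lam‖ * ‖mu‖ * N (∑ j, a j ⊗ₜ[ℂ] x j)) :=
  c0_norm_is_reasonable_cross_norm_general E N N_add N_smul N_delta N_compact
end

section
/- Let E be a complex normed space equipped with a multi-norm (‖·‖ₙ : n ∈ ℕ), and equip ℓ¹ with its minimum multi-norm ‖(a₁,…,aₖ)‖ₖ^min = maxᵢ ‖aᵢ‖₁. Then for every bounded linear operator T : ℓ¹ → E one has (as elements of [0,∞]) ‖T‖_mb = mb{T(δ_k) : k ∈ ℕ} = mb(T(ℓ¹_{[1]})), where ℓ¹_{[1]} is the closed unit ball of ℓ¹ and (δ_k) is the standard basis of ℓ¹. In particular, T is multi-bounded if and only if {T(δ_k) : k ∈ ℕ} is multi-bounded. -/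
open scoped ENNReal

/-- A multi-norm based on a complex normed space `E`: a sequence of norms `‖·‖ₙ` on `Eⁿ`
agreeing with the norm of `E` at level 1 and satisfying axioms (A1)-(A4). -/
structure MultiNorm (E : Type*) [NormedAddCommGroup E] [NormedSpace ℂ E] where
  toFun : (n : ℕ) → (Fin n → E) → ℝ
  eq_zero_iff : ∀ (n : ℕ) (x : Fin n → E), toFun n x = 0 ↔ x = 0
  add_le : ∀ (n : ℕ) (x y : Fin n → E), toFun n (x + y) ≤ toFun n x + toFun n y
  smul_eq : ∀ (n : ℕ) (c : ℂ) (x : Fin n → E), toFun n (c • x) = ‖c‖ * toFun n x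
  level_one : ∀ x : E, toFun 1 (fun _ => x) = ‖x‖
  perm : ∀ (n : ℕ) (σ : Equiv.Perm (Fin n)) (x : Fin n → E), toFun n (x ∘ σ) = toFun n x
  scal : ∀ (n : ℕ) (α : Fin n → ℂ) (x : Fin n → E),
    toFun n (fun i => α i • x i) ≤ (⨆ i, ‖α i‖) * toFun n x
  drop : ∀ (n : ℕ) (x : Fin n → E), toFun (n + 1) (Fin.snoc x 0) = toFun n x
  dup : ∀ (n : ℕ) (x : Fin (n + 1) → E),
    toFun (n + 2) (Fin.snoc x (x (Fin.last n))) = toFun (n + 1) x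

/-- The multi-bound `mb(B) ∈ [0,∞]` of a subset `B` of a multi-normed space. -/
noncomputable def MultiNorm.mbSet {E : Type*} [NormedAddCommGroup E] [NormedSpace ℂ E]
    (M : MultiNorm E) (B : Set E) : ℝ≥0∞ :=
  ⨆ (n : ℕ) (x : Fin n → E) (_ : ∀ i, x i ∈ B), ENNReal.ofReal (M.toFun n x)

/-! Row by row, a tuple `(∑ⱼ aᵢⱼ uⱼ)ᵢ` with `∑ⱼ |aᵢⱼ| ≤ 1` is a convex combination, with weights
`∏ᵢ |aᵢ,g(i)|`, of the tuples `(ζᵢ u_{g(i)})ᵢ` with `|ζᵢ| ≤ 1` (the slack `1 - ∑ⱼ |aᵢⱼ|` being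
spent on a zero entry), and by (A2) each of these has multi-norm at most `mb{uⱼ}`. With
`uⱼ = T δⱼ` this bounds `‖(T x₁, …, T xₙ)‖ₙ` for finitely supported `xᵢ` in the unit ball of `ℓ¹`;
the general case follows because `‖·‖ₙ` is dominated by the sum of the norms, hence continuous. -/

open Filter Topology

theorem pi_sum_smul_eq_sum_prod_smul {ι κ R V : Type*} [Fintype ι] [DecidableEq ι] [Fintype κ]
    [CommSemiring R] [AddCommMonoid V] [Module R V] (c : ι → κ → R) (hc : ∀ i, ∑ j, c i j = 1)
    (y : ι → κ → V) :
    (fun i => ∑ j, c i j • y i j) = ∑ g : ι → κ, (∏ i, c i (g i)) • fun i => y i (g i) := by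
  funext i₀
  have hrest : ∑ h : {i // i ≠ i₀} → κ, ∏ i : {i // i ≠ i₀}, c i (h i) = 1 := by
    rw [← Fintype.prod_sum]; simp [hc]
  have hne (i : {i // i ≠ i₀}) : (i : ι) = i₀ ↔ False := iff_false_intro i.2
  simp only [Finset.sum_apply, Pi.smul_apply]
  rw [← (Equiv.funSplitAt i₀ κ).symm.sum_comp, Fintype.sum_prod_type]
  refine Fintype.sum_congr _ _ fun j => ?_
  simp_rw [Fintype.prod_eq_mul_prod_subtype_ne _ i₀]
  simp [Equiv.funSplitAt_symm_apply, ← Finset.sum_smul, ← Finset.mul_sum, hne, hrest]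

theorem Real.iSup_le_iff_of_finite {ι : Type*} [Finite ι] {f : ι → ℝ} {a : ℝ} (ha : 0 ≤ a) :
    (⨆ i, f i) ≤ a ↔ ∀ i, f i ≤ a :=
  ⟨fun h i => (le_ciSup (Set.finite_range f).bddAbove i).trans h, fun h => Real.iSup_le h ha⟩

namespace MultiNorm

variable {E : Type*} [NormedAddCommGroup E] [NormedSpace ℂ E] (M : MultiNorm E)

noncomputable def seminorm (n : ℕ) : Seminorm ℂ (Fin n → E) :=
  Seminorm.of (M.toFun n) (M.add_le n) (M.smul_eq n)

@[simp]
theorem seminorm_apply (n : ℕ) (x : Fin n → E) : M.seminorm n x = M.toFun n x := rfl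

theorem toFun_smul_le {n : ℕ} (α : Fin n → ℂ) (x : Fin n → E) (hα : ∀ i, ‖α i‖ ≤ 1) :
    M.toFun n (fun i => α i • x i) ≤ M.toFun n x :=
  (M.scal n α x).trans <| mul_le_of_le_one_left (apply_nonneg (M.seminorm n) x)
    (Real.iSup_le hα zero_le_one)

theorem toFun_const (n : ℕ) (v : E) : M.toFun (n + 1) (fun _ => v) = ‖v‖ := by
  induction n with
  | zero => exact M.level_one v
  | succ n ih =>
    rw [← ih, ← M.dup n]
    congr
    funext i
    refine Fin.lastCases ?_ (fun j => ?_) i <;> simp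

theorem toFun_single_le {n : ℕ} (i : Fin n) (v : E) : M.toFun n (Pi.single i v) ≤ ‖v‖ := by
  obtain ⟨n, rfl⟩ := Nat.exists_eq_succ_of_ne_zero i.pos.ne'
  calc M.toFun (n + 1) (Pi.single i v)
      = M.toFun (n + 1) (fun j => (Pi.single i (1 : ℂ) : Fin (n + 1) → ℂ) j • v) := by
        congr; funext j; rcases eq_or_ne j i with rfl | h <;> simp [*]
    _ ≤ M.toFun (n + 1) (fun _ => v) := M.toFun_smul_le _ _ fun j => by
        rcases eq_or_ne j i with rfl | h <;> simp [*]
    _ = ‖v‖ := M.toFun_const n v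

theorem toFun_le_sum_norm (n : ℕ) (x : Fin n → E) : M.toFun n x ≤ ∑ i, ‖x i‖ :=
  calc M.toFun n x = M.seminorm n (∑ i, Pi.single i (x i)) := by rw [Finset.univ_sum_single]; rfl
    _ ≤ ∑ i, M.seminorm n (Pi.single i (x i)) :=
      Finset.le_sum_of_subadditive _ (map_zero _).le (map_add_le_add _) _ _
    _ ≤ ∑ i, ‖x i‖ := Finset.sum_le_sum fun i _ => M.toFun_single_le i (x i)

theorem continuous_toFun (n : ℕ) : Continuous (M.toFun n) := by
  refine (LipschitzWith.of_le_add_mul n fun x y => ?_).continuous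
  calc M.toFun n x ≤ M.toFun n y + M.toFun n (x - y) := le_map_add_map_sub (M.seminorm n) x y
    _ ≤ M.toFun n y + ∑ i, ‖(x - y) i‖ := by gcongr; exact M.toFun_le_sum_norm n _
    _ ≤ M.toFun n y + n * dist x y := by
      gcongr
      simpa [dist_eq_norm] using
        Finset.sum_le_card_nsmul Finset.univ _ _ fun i _ => norm_le_pi_norm (x - y) i

theorem toFun_sum_ofReal_smul_le {κ : Type*} [Fintype κ] {n : ℕ} (c : Fin n → κ → ℝ)
    (hc₀ : ∀ i j, 0 ≤ c i j) (hc₁ : ∀ i, ∑ j, c i j = 1) (y : Fin n → κ → E) {C : ℝ}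
    (hy : ∀ g : Fin n → κ, M.toFun n (fun i => y i (g i)) ≤ C) :
    M.toFun n (fun i => ∑ j, (c i j : ℂ) • y i j) ≤ C := by
  have hc : ∀ i, ∑ j, (c i j : ℂ) = 1 := fun i => by exact_mod_cast hc₁ i
  rw [pi_sum_smul_eq_sum_prod_smul _ hc]
  calc M.seminorm n (∑ g : Fin n → κ, (∏ i, (c i (g i) : ℂ)) • fun i => y i (g i))
      ≤ ∑ g : Fin n → κ, M.seminorm n ((∏ i, (c i (g i) : ℂ)) • fun i => y i (g i)) :=
        Finset.le_sum_of_subadditive _ (map_zero _).le (map_add_le_add _) _ _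
    _ = ∑ g : Fin n → κ, (∏ i, c i (g i)) * M.toFun n (fun i => y i (g i)) := by
        refine Fintype.sum_congr _ _ fun g => ?_
        rw [map_smul_eq_mul, ← Complex.ofReal_prod, Complex.norm_real, Real.norm_of_nonneg
          (Finset.prod_nonneg fun i _ => hc₀ i (g i)), seminorm_apply]
    _ ≤ ∑ g : Fin n → κ, (∏ i, c i (g i)) * C := by
        gcongr with g
        · exact Finset.prod_nonneg fun i _ => hc₀ i (g i)
        · exact hy g
    _ = C := by rw [← Finset.sum_mul, ← Fintype.prod_sum]; simp [hc₁]

theorem toFun_finsetSum_smul_le {τ : Type*} [Nonempty τ] (u : τ → E) {n : ℕ} {C : ℝ}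
    (hu : ∀ h : Fin n → τ, M.toFun n (u ∘ h) ≤ C) (s : Finset τ) (a : Fin n → τ → ℂ)
    (ha : ∀ i, ∑ t ∈ s, ‖a i t‖ ≤ 1) :
    M.toFun n (fun i => ∑ t ∈ s, a i t • u t) ≤ C := by
  let phase (z : ℂ) : ℂ := Complex.exp (z.arg * Complex.I)
  let c (i : Fin n) (j : Option s) : ℝ := j.elim (1 - ∑ t ∈ s, ‖a i t‖) fun t => ‖a i t‖
  let y (i : Fin n) (j : Option s) : E := j.elim 0 fun t => phase (a i t) • u t
  have hc₀ (i : Fin n) (j : Option s) : 0 ≤ c i j := by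
    cases j with
    | none => exact sub_nonneg.2 (ha i)
    | some t => exact norm_nonneg _
  have hc₁ (i : Fin n) : ∑ j, c i j = 1 := by
    simp [c, Fintype.sum_option, Finset.sum_attach s fun t => ‖a i t‖]
  have hy (g : Fin n → Option s) : M.toFun n (fun i => y i (g i)) ≤ C := by
    let β (i : Fin n) : ℂ := (g i).elim 0 fun t => phase (a i t)
    let h (i : Fin n) : τ := (g i).elim (Classical.arbitrary τ) fun t => t
    have hβ (i : Fin n) : ‖β i‖ ≤ 1 := by
      simp only [β]
      cases g i with
      | none => simp
      | some t => simp [phase, Complex.norm_exp_ofReal_mul_I]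
    have hyβ : (fun i => y i (g i)) = fun i => β i • u (h i) := by
      funext i
      simp only [y, β, h]
      cases g i <;> simp
    rw [hyβ]
    exact (M.toFun_smul_le β _ hβ).trans (hu h)
  convert M.toFun_sum_ofReal_smul_le c hc₀ hc₁ y hy using 2
  funext i
  rw [Fintype.sum_option, ← Finset.sum_coe_sort s]
  simp [c, y, phase, smul_smul, Complex.norm_mul_exp_arg_mul_I]

theorem toFun_map_le_of_forall_single {ι : Type*} [DecidableEq ι] [Nonempty ι]
    (T : lp (fun _ : ι => ℂ) 1 →L[ℂ] E) {n : ℕ} {C : ℝ}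
    (hT : ∀ h : Fin n → ι, M.toFun n (fun i => T (lp.single 1 (h i) 1)) ≤ C)
    (x : Fin n → lp (fun _ : ι => ℂ) 1) (hx : ∀ i, ‖x i‖ ≤ 1) :
    M.toFun n (fun i => T (x i)) ≤ C := by
  have hpartial : Tendsto (fun s : Finset ι => fun i => T (∑ t ∈ s, lp.single 1 t (x i t)))
      atTop (𝓝 fun i => T (x i)) :=
    tendsto_pi_nhds.2 fun i =>
      (T.continuous.tendsto _).comp (lp.hasSum_single ENNReal.one_ne_top (x i))
  have hsingle (t : ι) (a : ℂ) : T (lp.single 1 t a) = a • T (lp.single 1 t 1) := by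
    rw [← map_smul, ← lp.single_smul, smul_eq_mul, mul_one]
  refine le_of_tendsto' ((M.continuous_toFun n).tendsto _ |>.comp hpartial) fun s => ?_
  have hterm (i : Fin n) :
      T (∑ t ∈ s, lp.single 1 t (x i t)) = ∑ t ∈ s, x i t • T (lp.single 1 t 1) := by
    rw [map_sum]
    exact Finset.sum_congr rfl fun t _ => hsingle t _
  simp only [Function.comp_apply, hterm]
  refine M.toFun_finsetSum_smul_le (fun t => T (lp.single 1 t 1)) hT s _ fun i => ?_
  simpa using (lp.sum_rpow_le_norm_rpow (by norm_num) (x i) s).trans (by simpa using hx i)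

theorem mbSet_mono {B B' : Set E} (h : B ⊆ B') : M.mbSet B ≤ M.mbSet B' :=
  iSup₂_mono fun _ _ => iSup_mono' fun hx => ⟨fun i => h (hx i), le_rfl⟩

theorem toFun_le_toReal_mbSet {B : Set E} (hB : M.mbSet B ≠ ⊤) {n : ℕ} {x : Fin n → E}
    (hx : ∀ i, x i ∈ B) : M.toFun n x ≤ (M.mbSet B).toReal :=
  (ENNReal.ofReal_le_iff_le_toReal hB).1 (le_iSup₂_of_le n x (le_iSup_of_le hx le_rfl))

theorem iSup_toFun_comp_eq_mbSet_image {F : Type*} [SeminormedAddCommGroup F] (f : F → E) :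
    (⨆ (k : ℕ) (x : Fin k → F) (_ : (⨆ i, ‖x i‖) ≤ 1), ENNReal.ofReal (M.toFun k fun i => f (x i)))
      = M.mbSet (f '' Metric.closedBall 0 1) := by
  simp_rw [Real.iSup_le_iff_of_finite zero_le_one, ← mem_closedBall_zero_iff]
  refine le_antisymm (iSup₂_le fun k x => iSup_le fun hx => ?_)
    (iSup₂_le fun k y => iSup_le fun hy => ?_)
  · exact le_iSup₂_of_le k (f ∘ x) (le_iSup_of_le (fun i => ⟨x i, hx i, rfl⟩) le_rfl)
  · choose x hx hfx using hy
    refine le_iSup₂_of_le k x (le_iSup_of_le hx ?_)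
    simp [← funext hfx]

end MultiNorm

/-- for ℓ¹ equipped with its minimum multi-norm
`‖(a₁,…,aₖ)‖ₖ^min = maxᵢ ‖aᵢ‖₁` and `E` a multi-normed space, the multi-bounded norm of any
`T ∈ B(ℓ¹, E)`, namely `sup_k ‖T^{(k)}‖` (computed in `[0,∞]`), equals the multi-bound of
`{T δ_k : k ∈ ℕ}` and also equals the multi-bound of the image of the closed unit ball. -/
theorem multibounded_operator_from_l1
    (E : Type*) [NormedAddCommGroup E] [NormedSpace ℂ E] (M : MultiNorm E)
    (T : lp (fun _ : ℕ => ℂ) 1 →L[ℂ] E) :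
    (⨆ (k : ℕ) (x : Fin k → lp (fun _ : ℕ => ℂ) 1) (_ : (⨆ i, ‖x i‖) ≤ 1),
        ENNReal.ofReal (M.toFun k fun i => T (x i)))
      = M.mbSet {y : E | ∃ k : ℕ, y = T (lp.single 1 k 1)} ∧
    (⨆ (k : ℕ) (x : Fin k → lp (fun _ : ℕ => ℂ) 1) (_ : (⨆ i, ‖x i‖) ≤ 1),
        ENNReal.ofReal (M.toFun k fun i => T (x i)))
      = M.mbSet (T '' Metric.closedBall 0 1) := by
  have hball := M.iSup_toFun_comp_eq_mbSet_image T
  refine ⟨le_antisymm ?_ ?_, hball⟩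
  · refine iSup₂_le fun k x => iSup_le fun hx => ?_
    by_cases hδ : M.mbSet {y : E | ∃ k : ℕ, y = T (lp.single 1 k 1)} = ⊤
    · simp [hδ]
    refine ENNReal.ofReal_le_of_le_toReal (M.toFun_map_le_of_forall_single T
      (fun h => M.toFun_le_toReal_mbSet hδ fun i => ⟨h i, rfl⟩) x ?_)
    exact (Real.iSup_le_iff_of_finite zero_le_one).1 hx
  · rw [hball]
    refine M.mbSet_mono ?_
    rintro _ ⟨k, rfl⟩
    exact ⟨lp.single 1 k 1, by simp [lp.norm_single], rfl⟩
end

section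
/- Let E be a complex Banach space, take p,q with 1 ≤ p ≤ q < ∞, and let T ∈ B(ℓ¹, E). Then the set {T(δ_k) : k ∈ ℕ} is (p,q)-multi-bounded in E if and only if the adjoint T' : E' → ℓ^∞ is (q,p)-summing; in that case mb_{p,q}({T(δ_k) : k ∈ ℕ}) = π_{q,p}(T'). Here (δ_k) is the standard basis of ℓ¹. -/
open NormedSpace

variable {E : Type*} [NormedAddCommGroup E] [NormedSpace ℂ E]

/-- The weak `p`-summing norm `μ_{p,n}` of a tuple of functionals on `E`,
computed over the unit ball of `E`. -/
noncomputable def muPN (p : ℝ) {n : ℕ} (lam : Fin n → StrongDual ℂ E) : ℝ :=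
  sSup {r : ℝ | ∃ x : E, ‖x‖ ≤ 1 ∧ r = (∑ i, ‖lam i x‖ ^ p) ^ (1 / p)}

/-- The `(p,q)`-multi-norm of a tuple `(x₁,…,xₙ)` in `E`. -/
noncomputable def pqNorm (p q : ℝ) {n : ℕ} (x : Fin n → E) : ℝ :=
  sSup {r : ℝ | ∃ lam : Fin n → StrongDual ℂ E, muPN p lam ≤ 1 ∧
    r = (∑ i, ‖lam i (x i)‖ ^ q) ^ (1 / q)}

/-- The weak `p`-summing norm of a tuple of elements of the dual space `E'`, computed
over the unit ball of the bidual `E''` (as in the definition of summing operators). -/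
noncomputable def muDualPN (p : ℝ) {n : ℕ} (lam : Fin n → StrongDual ℂ E) : ℝ :=
  sSup {r : ℝ | ∃ Λ : StrongDual ℂ (StrongDual ℂ E), ‖Λ‖ ≤ 1 ∧ r = (∑ i, ‖Λ (lam i)‖ ^ p) ^ (1 / p)}

/-! Since `(ℓ¹)' = ℓ^∞`, `‖λ ∘ T‖ = sup_k |λ (T δ_k)|`; hence for `t < 1` one can pick `k_i` with
`t (Σ ‖λ_i ∘ T‖^q)^{1/q} ≤ (Σ |λ_i (T δ_{k_i})|^q)^{1/q} ≤ μ_{p,n}(λ) ‖(T δ_{k_i})_i‖_n^{(p,q)}`,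
the last step being the duality built into the multi-norm. Conversely each `|λ_i (T δ_k)|` is at
most `‖λ_i ∘ T‖`. So every multi-bound is a summing constant and vice versa, and the two optimal
constants agree.

The weak `p`-norm of `(λ_i)` over the unit ball of `E''` is the one over the unit ball of `E`:
for `Λ ∈ E''`, Hahn–Banach in `ℓ^p_n` gives a norming functional `f` of `(Λ λ_i)_i`, and
`f ((Λ λ_i)_i) = Λ (f ∘ (x ↦ (λ_i x)_i))`. -/

theorem le_of_forall_nonneg_lt_one_mul_le {a b : ℝ} (h : ∀ t, 0 ≤ t → t < 1 → t * a ≤ b) :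
    a ≤ b := by
  refine le_of_forall_lt_imp_le_of_dense fun r hr => ?_
  rcases le_or_gt r 0 with hr0 | hr0
  · exact hr0.trans (by simpa using h 0 le_rfl one_pos)
  · have ha : 0 < a := hr0.trans hr
    simpa [div_mul_cancel₀ r ha.ne'] using
      h (r / a) (div_nonneg hr0.le ha.le) ((div_lt_one ha).2 hr)

section SumRpow

variable {ι : Type*} [Fintype ι] {p : ℝ}

theorem sum_rpow_rpow_one_div_le_of_le (hp : 0 < p) {a b : ι → ℝ} (ha : ∀ i, 0 ≤ a i)
    (hab : ∀ i, a i ≤ b i) : (∑ i, a i ^ p) ^ (1 / p) ≤ (∑ i, b i ^ p) ^ (1 / p) := by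
  gcongr with i
  · exact Finset.sum_nonneg fun i _ => Real.rpow_nonneg (ha i) p
  · exact ha i
  · exact hab i

theorem sum_mul_rpow_rpow_one_div (hp : 0 < p) {t : ℝ} (ht : 0 ≤ t) {a : ι → ℝ}
    (ha : ∀ i, 0 ≤ a i) : (∑ i, (t * a i) ^ p) ^ (1 / p) = t * (∑ i, a i ^ p) ^ (1 / p) := by
  simp_rw [Real.mul_rpow ht (ha _), ← Finset.mul_sum]
  rw [Real.mul_rpow (by positivity) (Finset.sum_nonneg fun i _ => Real.rpow_nonneg (ha i) p),
    one_div, Real.rpow_rpow_inv ht hp.ne']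

end SumRpow

namespace lp

variable {𝕜 F ι : Type*} [DecidableEq ι] [NontriviallyNormedField 𝕜] [NormedAddCommGroup F]
  [NormedSpace 𝕜 F]

theorem opNorm_le_of_forall_single (L : lp (fun _ : ι => 𝕜) 1 →L[𝕜] F) {M : ℝ} (hM : 0 ≤ M)
    (h : ∀ k, ‖L (lp.single 1 k 1)‖ ≤ M) : ‖L‖ ≤ M := by
  refine L.opNorm_le_bound hM fun f => ?_
  have hf : Summable fun k => ‖f k‖ := by
    simpa using (lp.memℓp f).summable (by norm_num)
  have hterm : ∀ k, ‖L (lp.single 1 k (f k))‖ ≤ ‖f k‖ * M := fun k => by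
    have hsingle : lp.single 1 k (f k) = f k • (lp.single 1 k 1 : lp (fun _ : ι => 𝕜) 1) := by
      rw [← lp.single_smul, smul_eq_mul, mul_one]
    rw [hsingle, map_smul, norm_smul]
    exact mul_le_mul_of_nonneg_left (h k) (norm_nonneg _)
  calc ‖L f‖ = ‖∑' k, L (lp.single 1 k (f k))‖ := by
        rw [(L.hasSum (lp.hasSum_single ENNReal.one_ne_top f)).tsum_eq]
    _ ≤ ∑' k, ‖f k‖ * M :=
        tsum_of_norm_bounded (hf.mul_right M).hasSum hterm
    _ = M * ‖f‖ := by
        rw [tsum_mul_right, mul_comm]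
        congr 1
        simpa using (lp.norm_eq_tsum_rpow (p := 1) (by norm_num) f).symm

theorem exists_mul_opNorm_le_norm_apply_single [Nonempty ι] (L : lp (fun _ : ι => 𝕜) 1 →L[𝕜] F)
    {t : ℝ} (ht₀ : 0 ≤ t) (ht₁ : t < 1) : ∃ k, t * ‖L‖ ≤ ‖L (lp.single 1 k 1)‖ := by
  rcases (norm_nonneg L).eq_or_lt with hL | hL
  · exact ⟨Classical.arbitrary ι, by simp [← hL]⟩
  by_contra! h
  have := opNorm_le_of_forall_single L (by positivity) fun k => (h k).le
  nlinarith

theorem norm_apply_single_le (L : lp (fun _ : ι => 𝕜) 1 →L[𝕜] F) (k : ι) :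
    ‖L (lp.single 1 k 1)‖ ≤ ‖L‖ :=
  L.unit_le_opNorm _ (by simp [lp.norm_single])

end lp

section WeakNorm

variable {n : ℕ}

noncomputable def toPiLp (P : ENNReal) (lam : Fin n → StrongDual ℂ E) :
    E →L[ℂ] PiLp P (fun _ : Fin n => ℂ) :=
  (PiLp.continuousLinearEquiv P ℂ _).symm.toContinuousLinearMap.comp (ContinuousLinearMap.pi lam)

@[simp]
theorem toPiLp_apply (P : ENNReal) (lam : Fin n → StrongDual ℂ E) (x : E) :
    toPiLp P lam x = WithLp.toLp P fun i => lam i x := rfl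

theorem comp_toPiLp_eq_sum {P : ENNReal} (f : PiLp P (fun _ : Fin n => ℂ) →L[ℂ] ℂ)
    (lam : Fin n → StrongDual ℂ E) :
    f.comp (toPiLp P lam) = ∑ i, f (WithLp.toLp P fun j => if i = j then 1 else 0) • lam i := by
  ext x
  simpa [mul_comm] using
    (f.toLinearMap.comp (WithLp.linearEquiv P ℂ (Fin n → ℂ)).symm.toLinearMap).pi_apply_eq_sum_univ
      fun i => lam i x

theorem apply_toPiLp_inclusionInDoubleDual {P : ENNReal}
    (f : PiLp P (fun _ : Fin n => ℂ) →L[ℂ] ℂ) (lam : Fin n → StrongDual ℂ E)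
    (Λ : StrongDual ℂ (StrongDual ℂ E)) :
    f (toPiLp P (fun i => inclusionInDoubleDual ℂ (StrongDual ℂ E) (lam i)) Λ) =
      Λ (f.comp (toPiLp P lam)) := by
  rw [← ContinuousLinearMap.comp_apply, comp_toPiLp_eq_sum, comp_toPiLp_eq_sum]
  simp

variable {p : ℝ}

theorem norm_toPiLp_apply (hp : 0 < p) (lam : Fin n → StrongDual ℂ E) (x : E) :
    ‖toPiLp (ENNReal.ofReal p) lam x‖ = (∑ i, ‖lam i x‖ ^ p) ^ (1 / p) := by
  rw [PiLp.norm_eq_sum (by rwa [ENNReal.toReal_ofReal hp.le]), ENNReal.toReal_ofReal hp.le]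
  rfl

-- Makes `PiLp (ENNReal.ofReal p)` a normed space, so that `μ_{p,n}` becomes an operator norm.
variable [Fact (1 ≤ ENNReal.ofReal p)]

theorem muPN_eq_opNorm (lam : Fin n → StrongDual ℂ E) :
    muPN p lam = ‖toPiLp (ENNReal.ofReal p) lam‖ := by
  have hp : 0 < p := zero_lt_one.trans_le (ENNReal.one_le_ofReal.1 Fact.out)
  rw [← ContinuousLinearMap.sSup_unitClosedBall_eq_norm, muPN]
  congr 1
  ext r
  simp only [Set.mem_ofPred_eq, Set.mem_image, Metric.mem_closedBall, dist_zero_right,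
    norm_toPiLp_apply hp, eq_comm]

theorem muPN_nonneg (lam : Fin n → StrongDual ℂ E) : 0 ≤ muPN p lam := by
  rw [muPN_eq_opNorm]
  exact norm_nonneg _

theorem muPN_zero : muPN p (0 : Fin n → StrongDual ℂ E) = 0 := by
  rw [muPN_eq_opNorm, ← norm_zero (E := E →L[ℂ] PiLp (ENNReal.ofReal p) fun _ : Fin n => ℂ)]
  congr 1

theorem muPN_smul (c : ℂ) (lam : Fin n → StrongDual ℂ E) :
    muPN p (c • lam) = ‖c‖ * muPN p lam := by
  rw [muPN_eq_opNorm, muPN_eq_opNorm, ← norm_smul]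
  congr 1

theorem norm_le_muPN (lam : Fin n → StrongDual ℂ E) (i : Fin n) : ‖lam i‖ ≤ muPN p lam := by
  refine (lam i).opNorm_le_bound (muPN_nonneg lam) fun x => ?_
  rw [muPN_eq_opNorm]
  simpa using (PiLp.norm_apply_le (toPiLp (ENNReal.ofReal p) lam x) i).trans
    ((toPiLp (ENNReal.ofReal p) lam).le_opNorm x)

theorem muDualPN_eq_muPN (lam : Fin n → StrongDual ℂ E) : muDualPN p lam = muPN p lam := by
  set A := toPiLp (ENNReal.ofReal p) lam
  set A'' := toPiLp (E := StrongDual ℂ (StrongDual ℂ E)) (ENNReal.ofReal p)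
    fun i => inclusionInDoubleDual ℂ (StrongDual ℂ E) (lam i)
  have hdual : muDualPN p lam = ‖A''‖ := by
    rw [← muPN_eq_opNorm]
    simp only [muDualPN, muPN, dual_def]
  rw [hdual, muPN_eq_opNorm]
  refine le_antisymm (A''.opNorm_le_bound (norm_nonneg _) fun Λ => ?_) ?_
  · -- Hahn–Banach in `ℓ^p_n`
    obtain ⟨f, hf, hfv⟩ := exists_dual_vector'' ℂ (A'' Λ)
    calc ‖A'' Λ‖ = ‖f (A'' Λ)‖ := by simp [hfv]
      _ = ‖Λ (f.comp A)‖ := by rw [apply_toPiLp_inclusionInDoubleDual]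
      _ ≤ ‖Λ‖ * (‖f‖ * ‖A‖) := Λ.le_opNorm_of_le (f.opNorm_comp_le A)
      _ ≤ ‖Λ‖ * (1 * ‖A‖) := by gcongr
      _ = ‖A‖ * ‖Λ‖ := by ring
  · refine A.opNorm_le_bound (norm_nonneg _) fun x => ?_
    calc ‖A x‖ = ‖A'' (inclusionInDoubleDual ℂ E x)‖ := rfl
      _ ≤ ‖A''‖ * ‖x‖ := A''.le_opNorm_of_le (double_dual_bound ℂ E x)

end WeakNorm

section MultiNorm

variable {p q : ℝ} [Fact (1 ≤ ENNReal.ofReal p)] {n : ℕ}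

theorem pqNorm_bddAbove (hq : 0 < q) (x : Fin n → E) :
    BddAbove {r : ℝ | ∃ lam : Fin n → StrongDual ℂ E, muPN p lam ≤ 1 ∧
      r = (∑ i, ‖lam i (x i)‖ ^ q) ^ (1 / q)} := by
  refine ⟨(∑ i, ‖x i‖ ^ q) ^ (1 / q), ?_⟩
  rintro r ⟨lam, hlam, rfl⟩
  refine sum_rpow_rpow_one_div_le_of_le hq (fun i => norm_nonneg _) fun i => ?_
  exact (lam i).le_of_opNorm_le ((norm_le_muPN lam i).trans hlam) (x i) |>.trans_eq (one_mul _)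

theorem le_pqNorm (hq : 0 < q) {lam : Fin n → StrongDual ℂ E} (hlam : muPN p lam ≤ 1)
    (x : Fin n → E) : (∑ i, ‖lam i (x i)‖ ^ q) ^ (1 / q) ≤ pqNorm p q x :=
  le_csSup (pqNorm_bddAbove hq x) ⟨lam, hlam, rfl⟩

theorem pqNorm_nonneg (hq : 0 < q) (x : Fin n → E) : 0 ≤ pqNorm p q x :=
  le_trans (by positivity) (le_pqNorm hq ((muPN_zero (p := p)).trans_le zero_le_one) x)

theorem sum_rpow_le_muPN_mul_pqNorm (hq : 0 < q) (lam : Fin n → StrongDual ℂ E)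
    (x : Fin n → E) :
    (∑ i, ‖lam i (x i)‖ ^ q) ^ (1 / q) ≤ muPN p lam * pqNorm p q x := by
  rcases (muPN_nonneg (p := p) lam).eq_or_lt with hμ | hμ
  · have hlam : ∀ i, lam i = 0 := fun i => norm_le_zero_iff.1 (hμ ▸ norm_le_muPN lam i)
    simp [hlam, ← hμ, Real.zero_rpow hq.ne', Real.zero_rpow (inv_ne_zero hq.ne')]
  set μ := muPN p lam
  have hμ' : muPN p (((μ⁻¹ : ℝ) : ℂ) • lam) = 1 := by
    rw [muPN_smul, Complex.norm_real, Real.norm_of_nonneg (inv_nonneg.2 hμ.le),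
      inv_mul_cancel₀ hμ.ne']
  have h := le_pqNorm hq hμ'.le x
  simp only [Pi.smul_apply, smul_apply, norm_smul, Complex.norm_real,
    Real.norm_of_nonneg (inv_nonneg.2 hμ.le)] at h
  rwa [sum_mul_rpow_rpow_one_div hq (inv_nonneg.2 hμ.le) fun i => norm_nonneg _,
    inv_mul_le_iff₀ hμ] at h

end MultiNorm

def IsMultiBound (p q : ℝ) (s : Set E) (C : ℝ) : Prop :=
  ∀ (n : ℕ) (x : Fin n → E), (∀ i, x i ∈ s) → pqNorm p q x ≤ C

section SummingAdjoint

variable {ι : Type*} [DecidableEq ι] {p q : ℝ} [Fact (1 ≤ ENNReal.ofReal p)]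

theorem IsMultiBound.nonneg (hq : 0 < q) {s : Set E} {C : ℝ} (h : IsMultiBound p q s C) :
    0 ≤ C :=
  (pqNorm_nonneg hq ![]).trans (h 0 ![] finZeroElim)

theorem isMultiBound_of_summing (hq : 0 < q) (T : lp (fun _ : ι => ℂ) 1 →L[ℂ] E) {C : ℝ}
    (hC : 0 ≤ C) (hT : ∀ (n : ℕ) (lam : Fin n → StrongDual ℂ E),
      (∑ i, ‖(lam i).comp T‖ ^ q) ^ (1 / q) ≤ C * muPN p lam) :
    IsMultiBound p q {y | ∃ k, y = T (lp.single 1 k 1)} C := by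
  intro n x hx
  refine csSup_le ⟨_, 0, muPN_zero.trans_le zero_le_one, rfl⟩ ?_
  rintro r ⟨lam, hlam, rfl⟩
  calc (∑ i, ‖lam i (x i)‖ ^ q) ^ (1 / q) ≤ (∑ i, ‖(lam i).comp T‖ ^ q) ^ (1 / q) := by
        refine sum_rpow_rpow_one_div_le_of_le hq (fun i => norm_nonneg _) fun i => ?_
        obtain ⟨k, hk⟩ := hx i
        exact hk ▸ lp.norm_apply_single_le ((lam i).comp T) k
    _ ≤ C * muPN p lam := hT n lam
    _ ≤ C := mul_le_of_le_one_right hC hlam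

theorem IsMultiBound.summing [Nonempty ι] (hq : 0 < q) {T : lp (fun _ : ι => ℂ) 1 →L[ℂ] E}
    {C : ℝ} (hC : IsMultiBound p q {y | ∃ k, y = T (lp.single 1 k 1)} C)
    {n : ℕ} (lam : Fin n → StrongDual ℂ E) :
    (∑ i, ‖(lam i).comp T‖ ^ q) ^ (1 / q) ≤ C * muPN p lam := by
  refine le_of_forall_nonneg_lt_one_mul_le fun t ht₀ ht₁ => ?_
  choose k hk using fun i => lp.exists_mul_opNorm_le_norm_apply_single ((lam i).comp T) ht₀ ht₁
  calc t * (∑ i, ‖(lam i).comp T‖ ^ q) ^ (1 / q)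
      = (∑ i, (t * ‖(lam i).comp T‖) ^ q) ^ (1 / q) :=
        (sum_mul_rpow_rpow_one_div hq ht₀ fun i => norm_nonneg _).symm
    _ ≤ (∑ i, ‖lam i (T (lp.single 1 (k i) 1))‖ ^ q) ^ (1 / q) :=
        sum_rpow_rpow_one_div_le_of_le hq (fun i => by positivity) hk
    _ ≤ muPN p lam * pqNorm p q fun i => T (lp.single 1 (k i) 1) :=
        sum_rpow_le_muPN_mul_pqNorm hq lam _
    _ ≤ muPN p lam * C :=
        mul_le_mul_of_nonneg_left (hC n _ fun i => ⟨k i, rfl⟩) (muPN_nonneg lam)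
    _ = C * muPN p lam := mul_comm _ _

end SummingAdjoint

theorem multibound_eq_summing_norm_general
    (p q : ℝ) (hp : 1 ≤ p) (hpq : p ≤ q)
    (T : lp (fun _ : ℕ => ℂ) 1 →L[ℂ] E) :
    ((∃ C : ℝ, ∀ (n : ℕ) (x : Fin n → E),
        (∀ i, x i ∈ {y : E | ∃ k : ℕ, y = T (lp.single 1 k 1)}) → pqNorm p q x ≤ C)
      ↔ (∃ C : ℝ, 0 ≤ C ∧ ∀ (n : ℕ) (lam : Fin n → StrongDual ℂ E),
          (∑ i, ‖(lam i).comp T‖ ^ q) ^ (1 / q) ≤ C * muDualPN p lam)) ∧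
    ((∃ C : ℝ, ∀ (n : ℕ) (x : Fin n → E),
        (∀ i, x i ∈ {y : E | ∃ k : ℕ, y = T (lp.single 1 k 1)}) → pqNorm p q x ≤ C) →
      sSup {r : ℝ | ∃ (n : ℕ) (x : Fin n → E),
          (∀ i, x i ∈ {y : E | ∃ k : ℕ, y = T (lp.single 1 k 1)}) ∧ r = pqNorm p q x}
        = sInf {C : ℝ | 0 ≤ C ∧ ∀ (n : ℕ) (lam : Fin n → StrongDual ℂ E),
            (∑ i, ‖(lam i).comp T‖ ^ q) ^ (1 / q) ≤ C * muDualPN p lam}) := by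
  have : Fact (1 ≤ ENNReal.ofReal p) := ⟨by simpa using hp⟩
  have hq : 0 < q := by linarith
  simp only [muDualPN_eq_muPN]
  refine ⟨⟨fun ⟨C, hC⟩ => ⟨C, IsMultiBound.nonneg hq hC, fun n => IsMultiBound.summing hq hC⟩,
    fun ⟨C, hC₀, hC⟩ => ⟨C, isMultiBound_of_summing hq T hC₀ hC⟩⟩, ?_⟩
  rintro ⟨C, hC⟩
  set s := {y : E | ∃ k : ℕ, y = T (lp.single 1 k 1)}
  have hbdd : BddAbove {r | ∃ (n : ℕ) (x : Fin n → E), (∀ i, x i ∈ s) ∧ r = pqNorm p q x} :=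
    ⟨C, fun r ⟨n, x, hx, hr⟩ => hr ▸ hC n x hx⟩
  have hS : IsMultiBound p q s (sSup _) := fun n x hx => le_csSup hbdd ⟨n, x, hx, rfl⟩
  symm
  refine IsLeast.csInf_eq ⟨⟨hS.nonneg hq, fun n => hS.summing hq⟩, ?_⟩
  rintro C' ⟨hC'₀, hC'⟩
  exact csSup_le ⟨_, 0, ![], finZeroElim, rfl⟩ fun r ⟨n, x, hx, hr⟩ =>
    hr ▸ isMultiBound_of_summing hq T hC'₀ hC' n x hx

/-- for `1 ≤ p ≤ q < ∞` and `T ∈ B(ℓ¹, E)`, the set `{T δ_k : k ∈ ℕ}` is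
`(p,q)`-multi-bounded in `E` if and only if the adjoint `T' : E' → ℓ^∞ = (ℓ¹)'` is
`(q,p)`-summing; in that case `mb_{p,q}({T δ_k}) = π_{q,p}(T')`. -/
theorem multibound_eq_summing_norm
    [CompleteSpace E] (p q : ℝ) (hp : 1 ≤ p) (hpq : p ≤ q)
    (T : lp (fun _ : ℕ => ℂ) 1 →L[ℂ] E) :
    ((∃ C : ℝ, ∀ (n : ℕ) (x : Fin n → E),
        (∀ i, x i ∈ {y : E | ∃ k : ℕ, y = T (lp.single 1 k 1)}) → pqNorm p q x ≤ C)
      ↔ (∃ C : ℝ, 0 ≤ C ∧ ∀ (n : ℕ) (lam : Fin n → StrongDual ℂ E),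
          (∑ i, ‖(lam i).comp T‖ ^ q) ^ (1 / q) ≤ C * muDualPN p lam)) ∧
    ((∃ C : ℝ, ∀ (n : ℕ) (x : Fin n → E),
        (∀ i, x i ∈ {y : E | ∃ k : ℕ, y = T (lp.single 1 k 1)}) → pqNorm p q x ≤ C) →
      sSup {r : ℝ | ∃ (n : ℕ) (x : Fin n → E),
          (∀ i, x i ∈ {y : E | ∃ k : ℕ, y = T (lp.single 1 k 1)}) ∧ r = pqNorm p q x}
        = sInf {C : ℝ | 0 ≤ C ∧ ∀ (n : ℕ) (lam : Fin n → StrongDual ℂ E),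
            (∑ i, ‖(lam i).comp T‖ ^ q) ^ (1 / q) ≤ C * muDualPN p lam}) :=
  multibound_eq_summing_norm_general p q hp hpq T
end

section
/- Let (Ω,μ) be a measure space, let p ∈ [1,∞), let n ∈ ℕ, and let f₁,…,fₙ ∈ L^p(Ω). Then sup{(Σᵢ₌₁ⁿ ‖χ_{Xᵢ}fᵢ‖_p^p)^{1/p} : {X₁,…,Xₙ} a measurable partition of Ω} = (∫_Ω maxᵢ |fᵢ(t)|^p dμ(t))^{1/p}; that is, the standard p-multi-norm ‖(f₁,…,fₙ)‖ₙ^{[p]} equals the L^p-norm of the pointwise maximum |f₁| ∨ ⋯ ∨ |fₙ|. -/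
/-!
For any measurable partition, `∑ᵢ ∫_{Xᵢ} |fᵢ|^p ≤ ∫ maxᵢ |fᵢ|^p` since `|fᵢ| ≤ maxⱼ |fⱼ|` on `Xᵢ`.
Equality holds for the partition in which `Xᵢ` is the set of points where `|fᵢ|` attains the
maximum (ties going to the least index); it is measurable once each `fᵢ` is replaced by a
measurable representative, which changes no integral.
-/

open MeasureTheory Set
open scoped ENNReal

theorem ENNReal.rpow_sum_toReal_rpow {ι : Type*} (s : Finset ι) {a : ι → ℝ≥0∞}
    (ha : ∀ i ∈ s, a i ≠ ∞) {p : ℝ} (hp : 0 ≤ p) (q : ℝ) :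
    (∑ i ∈ s, (a i).toReal ^ p) ^ q = ((∑ i ∈ s, a i ^ p) ^ q).toReal := by
  rw [← ENNReal.toReal_rpow,
    ENNReal.toReal_sum fun i hi => ENNReal.rpow_ne_top_of_nonneg hp (ha i hi)]
  simp_rw [← ENNReal.toReal_rpow]

theorem eLpNorm_ofReal_rpow_eq_lintegral {α ε : Type*} [MeasurableSpace α] [ENorm ε]
    {μ : Measure α} {p : ℝ} (hp : 0 < p) (f : α → ε) :
    eLpNorm f (ENNReal.ofReal p) μ ^ p = ∫⁻ t, ‖f t‖ₑ ^ p ∂μ := by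
  rw [eLpNorm_eq_eLpNorm' (by simpa using hp) ENNReal.ofReal_ne_top,
    ENNReal.toReal_ofReal hp.le, lintegral_rpow_enorm_eq_rpow_eLpNorm' hp]

theorem MeasurableSet.disjointed_of_locallyFiniteOrderBot {α ι : Type*} [MeasurableSpace α]
    [Preorder ι] [LocallyFiniteOrderBot ι] {X : ι → Set α} (hX : ∀ i, MeasurableSet (X i))
    (i : ι) : MeasurableSet (disjointed X i) := by
  rw [disjointed_eq_inter_compl]
  exact (hX i).inter <| (finite_Iio i).measurableSet_biInter fun j _ => (hX j).compl

section ArgmaxPartition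

variable {α ι β : Type*} [LinearOrder ι] [LocallyFiniteOrderBot ι]

def argmaxPartition [LE β] (g : ι → α → β) : ι → Set α :=
  disjointed fun i => {t | ∀ j, g j t ≤ g i t}

theorem pairwise_disjoint_argmaxPartition [LE β] (g : ι → α → β) :
    Pairwise (Function.onFun Disjoint (argmaxPartition g)) :=
  disjoint_disjointed _

theorem iUnion_argmaxPartition [Finite ι] [Nonempty ι] [LinearOrder β] (g : ι → α → β) :
    ⋃ i, argmaxPartition g i = univ := by
  rw [argmaxPartition, iUnion_disjointed, eq_univ_iff_forall]
  intro t
  obtain ⟨i, hi⟩ := Finite.exists_max (g · t)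
  exact mem_iUnion.2 ⟨i, hi⟩

theorem iSup_eq_of_mem_argmaxPartition [CompleteLattice β] {g : ι → α → β} {i : ι} {t : α}
    (ht : t ∈ argmaxPartition g i) : ⨆ j, g j t = g i t :=
  le_antisymm (iSup_le (disjointed_subset _ i ht)) (le_iSup (g · t) i)

theorem measurableSet_argmaxPartition [Countable ι] [MeasurableSpace α] [TopologicalSpace β]
    [PartialOrder β] [OrderClosedTopology β] [SecondCountableTopology β] [MeasurableSpace β]
    [OpensMeasurableSpace β] {g : ι → α → β} (hg : ∀ i, Measurable (g i)) (i : ι) :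
    MeasurableSet (argmaxPartition g i) := by
  refine MeasurableSet.disjointed_of_locallyFiniteOrderBot (fun i => ?_) i
  simp only [ofPred_forall]
  exact MeasurableSet.iInter fun j => measurableSet_le (hg j) (hg i)

end ArgmaxPartition

section PartitionIntegrals

variable {α ι : Type*} [MeasurableSpace α] {μ : Measure α}

theorem sum_setLIntegral_le_lintegral_iSup [Fintype ι] (G : ι → α → ℝ≥0∞) {X : ι → Set α}
    (hX : ∀ i, MeasurableSet (X i)) (hXd : Pairwise (Function.onFun Disjoint X)) :
    ∑ i, ∫⁻ t in X i, G i t ∂μ ≤ ∫⁻ t, ⨆ i, G i t ∂μ :=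
  calc ∑ i, ∫⁻ t in X i, G i t ∂μ ≤ ∑ i, ∫⁻ t in X i, ⨆ j, G j t ∂μ :=
        Finset.sum_le_sum fun i _ => lintegral_mono fun t => le_iSup (G · t) i
    _ = ∫⁻ t in ⋃ i, X i, ⨆ j, G j t ∂μ := by rw [lintegral_iUnion hX hXd, tsum_fintype]
    _ ≤ ∫⁻ t, ⨆ i, G i t ∂μ := setLIntegral_le_lintegral _ _

theorem exists_measurable_partition_sum_setLIntegral_eq_lintegral_iSup [Fintype ι]
    [LinearOrder ι] [LocallyFiniteOrderBot ι] [Nonempty ι] {G : ι → α → ℝ≥0∞}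
    (hG : ∀ i, AEMeasurable (G i) μ) :
    ∃ X : ι → Set α, (∀ i, MeasurableSet (X i)) ∧ Pairwise (Function.onFun Disjoint X) ∧
      (⋃ i, X i) = univ ∧ ∑ i, ∫⁻ t in X i, G i t ∂μ = ∫⁻ t, ⨆ i, G i t ∂μ := by
  set H := fun i => (hG i).mk (G i)
  have hGH : ∀ᵐ t ∂μ, ∀ i, G i t = H i t := ae_all_iff.2 fun i => (hG i).ae_eq_mk
  set X := argmaxPartition H
  have hXm : ∀ i, MeasurableSet (X i) :=
    measurableSet_argmaxPartition fun i => (hG i).measurable_mk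
  have hXd : Pairwise (Function.onFun Disjoint X) := pairwise_disjoint_argmaxPartition H
  have hXu : ⋃ i, X i = univ := iUnion_argmaxPartition H
  have hpiece : ∀ i, ∫⁻ t in X i, G i t ∂μ = ∫⁻ t in X i, ⨆ j, H j t ∂μ := fun i =>
    calc ∫⁻ t in X i, G i t ∂μ = ∫⁻ t in X i, H i t ∂μ :=
          lintegral_congr_ae (ae_restrict_of_ae (hG i).ae_eq_mk)
      _ = ∫⁻ t in X i, ⨆ j, H j t ∂μ :=
          (setLIntegral_congr_fun (hXm i) fun t ht => iSup_eq_of_mem_argmaxPartition ht).symm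
  refine ⟨X, hXm, hXd, hXu, ?_⟩
  calc ∑ i, ∫⁻ t in X i, G i t ∂μ = ∫⁻ t in ⋃ i, X i, ⨆ j, H j t ∂μ := by
        rw [lintegral_iUnion hXm hXd, tsum_fintype]
        exact Finset.sum_congr rfl fun i _ => hpiece i
    _ = ∫⁻ t, ⨆ i, G i t ∂μ := by
        rw [hXu, Measure.restrict_univ]
        exact lintegral_congr_ae (hGH.mono fun t ht => by simp only [ht])

end PartitionIntegrals

/-- for a measure space `(Ω,μ)`, `p ∈ [1,∞)` and `f₁,…,fₙ ∈ L^p(Ω)`, the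
standard `p`-multi-norm `‖(f₁,…,fₙ)‖ₙ^{[p]}`, i.e. the supremum over measurable
partitions `{X₁,…,Xₙ}` of `Ω` of `(Σᵢ ‖χ_{Xᵢ} fᵢ‖_p^p)^{1/p}`, equals the `L^p`-norm
`(∫_Ω maxᵢ |fᵢ|^p dμ)^{1/p}` of the pointwise maximum `|f₁| ∨ ⋯ ∨ |fₙ|`. -/
theorem standard_p_multinorm_eq_lattice_norm
    {α : Type*} [MeasurableSpace α] (μ : Measure α)
    (p : ℝ) (hp : 1 ≤ p) (n : ℕ) (hn : 0 < n)
    (f : Fin n → Lp ℂ (ENNReal.ofReal p) μ) :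
    sSup {r : ℝ | ∃ X : Fin n → Set α,
        (∀ i, MeasurableSet (X i)) ∧ Pairwise (Function.onFun Disjoint X) ∧
        (⋃ i, X i) = Set.univ ∧
        r = (∑ i, (eLpNorm (f i) (ENNReal.ofReal p) (μ.restrict (X i))).toReal ^ p) ^ (1 / p)}
      = ((∫⁻ t, (⨆ i, (‖(f i : α → ℂ) t‖₊ : ℝ≥0∞)) ^ p ∂μ) ^ (1 / p)).toReal := by
  have hp0 : 0 < p := by linarith
  have : Nonempty (Fin n) := ⟨⟨0, hn⟩⟩
  set G : Fin n → α → ℝ≥0∞ := fun i t => ‖(f i : α → ℂ) t‖ₑ ^ p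
  have hfin : ∀ i s, eLpNorm (f i) (ENNReal.ofReal p) (μ.restrict s) ≠ ∞ := fun i _ =>
    ((Lp.memLp (f i)).restrict _).eLpNorm_ne_top
  have hr : ∀ X : Fin n → Set α,
      (∑ i, (eLpNorm (f i) (ENNReal.ofReal p) (μ.restrict (X i))).toReal ^ p) ^ (1 / p)
        = ((∑ i, ∫⁻ t in X i, G i t ∂μ) ^ (1 / p)).toReal := fun X => by
    rw [ENNReal.rpow_sum_toReal_rpow _ (fun i _ => hfin i (X i)) hp0.le]
    simp only [eLpNorm_ofReal_rpow_eq_lintegral hp0, G]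
  have hsup : ∀ t, (⨆ i, (‖(f i : α → ℂ) t‖₊ : ℝ≥0∞)) ^ p = ⨆ i, G i t := fun t =>
    Monotone.map_iSup_of_continuousAt (f := (· ^ p))
      (ENNReal.continuous_rpow_const.continuousAt) (ENNReal.monotone_rpow_of_nonneg hp0.le)
      (ENNReal.zero_rpow_of_pos hp0)
  obtain ⟨X, hXm, hXd, hXu, hX⟩ := exists_measurable_partition_sum_setLIntegral_eq_lintegral_iSup
    (μ := μ) fun i => (Lp.aestronglyMeasurable (f i)).enorm.pow_const p
  simp_rw [hsup]
  refine IsGreatest.csSup_eq ⟨⟨X, hXm, hXd, hXu, by rw [hr, hX]⟩, ?_⟩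
  rintro _ ⟨Y, hYm, hYd, -, rfl⟩
  have hmax_fin : ∫⁻ t, ⨆ i, G i t ∂μ ≠ ∞ := by
    rw [← hX]
    refine ENNReal.sum_ne_top.2 fun i _ => ?_
    rw [← eLpNorm_ofReal_rpow_eq_lintegral hp0]
    exact ENNReal.rpow_ne_top_of_nonneg hp0.le (hfin i (X i))
  rw [hr]
  exact ENNReal.toReal_mono (ENNReal.rpow_ne_top_of_nonneg (by positivity) hmax_fin)
    (ENNReal.rpow_le_rpow (sum_setLIntegral_le_lintegral_iSup G hYm hYd) (by positivity))
end

section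
/- Let E be a complex Banach space, take p ∈ [1,∞) with conjugate index p' (1/p + 1/p' = 1, with p' = ∞ when p = 1), and let (Ω,μ) be a measure space such that L^p(Ω) is infinite-dimensional (equivalently: for every n ∈ ℕ there exist pairwise disjoint measurable subsets X₁,…,Xₙ of Ω with 0 < μ(Xᵢ) < ∞). Then for each n ∈ ℕ, the set Bₙ = {(T'φ₁,…,T'φₙ) : T ∈ B(E, L^p(Ω)), ‖T‖ ≤ 1, φ₁,…,φₙ ∈ L^{p'}(Ω), ‖φᵢ‖ ≤ 1, with the supports of φ₁,…,φₙ pairwise disjoint} equals the set {(λ₁,…,λₙ) ∈ (E')ⁿ : μ_{p,n}(λ₁,…,λₙ) ≤ 1}. Here T' denotes the adjoint of T. -/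
open MeasureTheory NormedSpace
open scoped ENNReal

variable {E : Type*} [NormedAddCommGroup E] [NormedSpace ℂ E]

/-!
If `λᵢ = T'φᵢ`, Hölder's inequality on the support `Aᵢ` of `φᵢ` gives `|λᵢ(x)| ≤ ‖1_{Aᵢ} Tx‖_p`;
as the `Aᵢ` are almost disjoint, summing `p`-th powers gives `Σ |λᵢ(x)|^p ≤ ‖Tx‖_p^p ≤ ‖x‖^p`,
which by homogeneity is `μ_{p,n}(λ) ≤ 1`. Conversely, if `μ_{p,n}(λ) ≤ 1`, take disjoint sets `Xᵢ`
of finite positive measure, `Tx = Σ λᵢ(x) μ(Xᵢ)^{-1/p} 1_{Xᵢ}` and `φᵢ = μ(Xᵢ)^{-1/p'} 1_{Xᵢ}`: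
then `‖Tx‖_p^p = Σ |λᵢ(x)|^p ≤ ‖x‖^p` and `∫ (Tx) φᵢ = λᵢ(x)`.
-/

open Function

theorem sum_enorm_rpow_le_enorm_rpow_iff {ι F G : Type*} [Fintype ι] [SeminormedAddCommGroup F]
    [SeminormedAddCommGroup G] (a : ι → F) (b : G) {r : ℝ} (hr : 0 ≤ r) :
    ∑ i, ‖a i‖ₑ ^ r ≤ ‖b‖ₑ ^ r ↔ ∑ i, ‖a i‖ ^ r ≤ ‖b‖ ^ r := by
  simp only [← ofReal_norm, ENNReal.ofReal_rpow_of_nonneg (norm_nonneg _) hr]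
  rw [← ENNReal.ofReal_sum_of_nonneg fun i _ => by positivity,
    ENNReal.ofReal_le_ofReal_iff (by positivity)]

theorem sum_norm_rpow_smul {ι : Type*} [Fintype ι] (lam : ι → StrongDual ℂ E) (c : ℂ) (x : E)
    (r : ℝ) :
    ∑ i, ‖lam i (c • x)‖ ^ r = ‖c‖ ^ r * ∑ i, ‖lam i x‖ ^ r := by
  simp only [map_smul, smul_eq_mul, norm_mul, Real.mul_rpow (norm_nonneg c) (norm_nonneg _),
    Finset.mul_sum]

theorem muPN_le_one_iff {n : ℕ} (lam : Fin n → StrongDual ℂ E) {r : ℝ} (hr : 0 < r) :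
    muPN r lam ≤ 1 ↔ ∀ x, ∑ i, ‖lam i x‖ ^ r ≤ ‖x‖ ^ r := by
  have hsum_nonneg : ∀ x, 0 ≤ ∑ i, ‖lam i x‖ ^ r := fun x => by positivity
  constructor
  · intro hmu x
    rcases eq_or_ne x 0 with rfl | hx
    · simp [Real.zero_rpow hr.ne']
    have hbdd : BddAbove {s : ℝ | ∃ y : E, ‖y‖ ≤ 1 ∧ s = (∑ i, ‖lam i y‖ ^ r) ^ (1 / r)} := by
      refine ⟨(∑ i, ‖lam i‖ ^ r) ^ (1 / r), ?_⟩
      rintro _ ⟨y, hy, rfl⟩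
      gcongr with i
      exact (lam i).unit_le_opNorm y hy
    have hnx : 0 < ‖x‖ := norm_pos_iff.2 hx
    set y : E := ((‖x‖⁻¹ : ℝ) : ℂ) • x
    have hy : ‖y‖ ≤ 1 := by
      rw [norm_smul, Complex.norm_real, norm_inv, norm_norm, inv_mul_cancel₀ hnx.ne']
    have hroot : (∑ i, ‖lam i y‖ ^ r) ^ (1 / r) ≤ 1 := (le_csSup hbdd ⟨y, hy, rfl⟩).trans hmu
    have hy_sum : ∑ i, ‖lam i y‖ ^ r ≤ 1 := by
      rwa [one_div, Real.rpow_inv_le_iff_of_pos (hsum_nonneg y) zero_le_one hr,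
        Real.one_rpow] at hroot
    rwa [sum_norm_rpow_smul lam _ x r, Complex.norm_real, norm_inv, norm_norm,
      Real.inv_rpow hnx.le, inv_mul_le_iff₀ (by positivity), mul_one] at hy_sum
  · intro h
    refine Real.sSup_le ?_ zero_le_one
    rintro _ ⟨x, hx, rfl⟩
    exact Real.rpow_le_one (hsum_nonneg x)
      ((h x).trans (Real.rpow_le_one (norm_nonneg x) hx hr.le)) (by positivity)

theorem ENNReal.HolderConjugate.one_div_toReal_add_one_div_toReal {p q : ℝ≥0∞}
    [p.HolderConjugate q] : 1 / p.toReal + 1 / q.toReal = 1 := by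
  simp only [one_div, ← ENNReal.toReal_inv]
  rw [← ENNReal.toReal_add (ENNReal.inv_ne_top.2 (HolderConjugate.ne_zero p q))
    (ENNReal.inv_ne_top.2 (HolderConjugate.ne_zero q p)), HolderConjugate.inv_add_inv_eq_one,
    ENNReal.toReal_one]

namespace MeasureTheory

section DisjointSupports

variable {α ι F : Type*} [MeasurableSpace α] {μ : Measure α} {p q : ℝ≥0∞} [Fintype ι]
  [NormedAddCommGroup F]

theorem eLpNorm_rpow_toReal_eq_lintegral (hp0 : p ≠ 0) (hp : p ≠ ∞) (f : α → F) :
    eLpNorm f p μ ^ p.toReal = ∫⁻ t, ‖f t‖ₑ ^ p.toReal ∂μ := by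
  rw [eLpNorm_eq_lintegral_rpow_enorm_toReal hp0 hp, ← ENNReal.rpow_mul,
    one_div_mul_cancel (ENNReal.toReal_ne_zero.2 ⟨hp0, hp⟩), ENNReal.rpow_one]

theorem sum_eLpNorm_restrict_rpow_le (hp0 : p ≠ 0) (hp : p ≠ ∞) {A : ι → Set α}
    (hA : ∀ i, NullMeasurableSet (A i) μ) (hd : Pairwise (AEDisjoint μ on A)) (f : α → F) :
    ∑ i, eLpNorm f p (μ.restrict (A i)) ^ p.toReal ≤ eLpNorm f p μ ^ p.toReal := by
  simp only [eLpNorm_rpow_toReal_eq_lintegral hp0 hp]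
  exact (tsum_fintype _).symm.trans (lintegral_iUnion₀ hA hd _).symm |>.trans_le
    (setLIntegral_le_lintegral _ _)

theorem eLpNorm_sum_rpow_of_pairwise_disjoint_support (hp0 : p ≠ 0) (hp : p ≠ ∞)
    {f : ι → α → F} (hf : ∀ i, AEStronglyMeasurable (f i) μ)
    (hd : Pairwise (Disjoint on fun i => support (f i))) :
    eLpNorm (∑ i, f i) p μ ^ p.toReal = ∑ i, eLpNorm (f i) p μ ^ p.toReal := by
  have hp_pos : 0 < p.toReal := ENNReal.toReal_pos hp0 hp
  have hpoint : ∀ t, ‖(∑ i, f i) t‖ₑ ^ p.toReal = ∑ i, ‖f i t‖ₑ ^ p.toReal := by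
    intro t
    by_cases ht : ∃ j, t ∈ support (f j)
    · obtain ⟨j, hj⟩ := ht
      have hzero : ∀ i, i ≠ j → f i t = 0 := fun i hij =>
        notMem_support.1 fun hi => (hd hij).le_bot ⟨hi, hj⟩
      rw [Finset.sum_apply, Finset.sum_eq_single_of_mem j (Finset.mem_univ j)
          fun i _ hij => hzero i hij,
        Finset.sum_eq_single_of_mem j (Finset.mem_univ j)
          fun i _ hij => by simp [hzero i hij, ENNReal.zero_rpow_of_pos hp_pos]]
    · push Not at ht
      simp [notMem_support.1 (ht _), ENNReal.zero_rpow_of_pos hp_pos]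
  simp only [eLpNorm_rpow_toReal_eq_lintegral hp0 hp, hpoint]
  exact lintegral_finsetSum' _ fun i _ => (hf i).enorm.pow_const _

theorem enorm_integral_mul_le_restrict_support {𝕜 : Type*} [RCLike 𝕜] [p.HolderConjugate q]
    {f g : α → 𝕜} (hf : AEStronglyMeasurable f μ) (hg : AEStronglyMeasurable g μ) :
    ‖∫ t, f t * g t ∂μ‖ₑ ≤ eLpNorm f p (μ.restrict (support g)) * eLpNorm g q μ := by
  rw [← setIntegral_eq_integral_of_forall_compl_eq_zero (s := support g) fun t ht => by
    rw [notMem_support.1 ht, mul_zero]]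
  calc ‖∫ t in support g, f t * g t ∂μ‖ₑ
      ≤ eLpNorm (f • g) 1 (μ.restrict (support g)) := by
        rw [eLpNorm_one_eq_lintegral_enorm]; exact enorm_integral_le_lintegral_enorm _
    _ ≤ eLpNorm f p (μ.restrict (support g)) * eLpNorm g q (μ.restrict (support g)) :=
        eLpNorm_smul_le_mul_eLpNorm hg.restrict hf.restrict
    _ ≤ eLpNorm f p (μ.restrict (support g)) * eLpNorm g q μ :=
        mul_le_mul_right (eLpNorm_mono_measure _ Measure.restrict_le_self) _

theorem sum_enorm_integral_mul_rpow_le {𝕜 : Type*} [RCLike 𝕜] [p.HolderConjugate q]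
    (hp : p ≠ ∞) {f : α → 𝕜} (hf : AEStronglyMeasurable f μ) {φ : ι → α → 𝕜}
    (hφm : ∀ i, AEStronglyMeasurable (φ i) μ) (hφ : ∀ i, eLpNorm (φ i) q μ ≤ 1)
    (hd : ∀ i j, i ≠ j → (fun t => φ i t * φ j t) =ᵐ[μ] 0) :
    ∑ i, ‖∫ t, f t * φ i t ∂μ‖ₑ ^ p.toReal ≤ eLpNorm f p μ ^ p.toReal := by
  have hp0 : p ≠ 0 := ENNReal.HolderConjugate.ne_zero p q
  refine le_trans (Finset.sum_le_sum fun i _ => ?_)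
    (sum_eLpNorm_restrict_rpow_le hp0 hp (A := fun i => support (φ i))
      (fun i => (hφm i).aemeasurable.nullMeasurableSet_preimage (measurableSet_singleton 0).compl)
      (fun i j hij => by
        simpa only [AEDisjoint, ← support_mul] using
          (Measure.measure_support_eq_zero_iff μ).2 (hd i j hij))
      f)
  gcongr
  calc ‖∫ t, f t * φ i t ∂μ‖ₑ ≤ eLpNorm f p (μ.restrict (support (φ i))) * eLpNorm (φ i) q μ :=
        enorm_integral_mul_le_restrict_support hf (hφm i)
    _ ≤ eLpNorm f p (μ.restrict (support (φ i))) := mul_le_of_le_one_right' (hφ i)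

end DisjointSupports

section IndicatorOperator

variable {α ι : Type*} [MeasurableSpace α] {μ : Measure α} {p q : ℝ≥0∞} {s : Set α}

/-- The factor making `s.indicator (indicatorScale μ p s)` a unit vector of `L^p`; for `p = ∞`,
`1 / p.toReal = 0` and the factor is `1`, as it should be. -/
noncomputable def indicatorScale (μ : Measure α) (p : ℝ≥0∞) (s : Set α) : ℝ :=
  ((μ s ^ (1 / p.toReal))⁻¹).toReal

theorem enorm_indicatorScale_mul (hs0 : μ s ≠ 0) (hs : μ s ≠ ∞) :
    ‖(indicatorScale μ p s : ℂ)‖ₑ * μ s ^ (1 / p.toReal) = 1 := by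
  have h0 : μ s ^ (1 / p.toReal) ≠ 0 := by simp [ENNReal.rpow_eq_zero_iff, hs0, hs]
  have htop : μ s ^ (1 / p.toReal) ≠ ∞ := by simp [ENNReal.rpow_eq_top_iff, hs0, hs]
  rw [indicatorScale, ← ofReal_norm, Complex.norm_real, Real.norm_of_nonneg ENNReal.toReal_nonneg,
    ENNReal.ofReal_toReal (ENNReal.inv_ne_top.2 h0), ENNReal.inv_mul_cancel h0 htop]

theorem eLpNorm_indicator_indicatorScale (hs : MeasurableSet s) (hs0 : μ s ≠ 0)
    (hstop : μ s ≠ ∞) (hp0 : p ≠ 0) :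
    eLpNorm (s.indicator fun _ => (indicatorScale μ p s : ℂ)) p μ = 1 := by
  rw [eLpNorm_indicator_const' hs hs0 hp0, enorm_indicatorScale_mul hs0 hstop]

theorem measureReal_mul_indicatorScale_mul_indicatorScale [p.HolderConjugate q]
    (hs0 : μ s ≠ 0) (hstop : μ s ≠ ∞) :
    μ.real s * indicatorScale μ p s * indicatorScale μ q s = 1 := by
  have hpow : μ s ^ (1 / p.toReal) * μ s ^ (1 / q.toReal) = μ s := by
    rw [← ENNReal.rpow_add _ _ hs0 hstop,
      ENNReal.HolderConjugate.one_div_toReal_add_one_div_toReal, ENNReal.rpow_one]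
  rw [indicatorScale, indicatorScale, measureReal_def, ← ENNReal.toReal_mul, ← ENNReal.toReal_mul,
    mul_assoc, ← ENNReal.mul_inv (by simp [hs0]) (by simp [hs0]), hpow,
    ENNReal.mul_inv_cancel hs0 hstop, ENNReal.toReal_one]

variable [Fintype ι] {X : ι → Set α} (hXm : ∀ i, MeasurableSet (X i)) (hXtop : ∀ i, μ (X i) ≠ ∞)

noncomputable def indicatorSumCLM (p : ℝ≥0∞) [Fact (1 ≤ p)] (lam : ι → StrongDual ℂ E) :
    E →L[ℂ] Lp ℂ p μ :=
  ∑ i, (lam i).smulRight (indicatorConstLp p (hXm i) (hXtop i) (indicatorScale μ p (X i) : ℂ))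

variable [Fact (1 ≤ p)] (lam : ι → StrongDual ℂ E)

theorem coeFn_indicatorSumCLM (x : E) :
    ⇑(indicatorSumCLM hXm hXtop p lam x)
      =ᵐ[μ] ∑ i, lam i x • (X i).indicator fun _ => (indicatorScale μ p (X i) : ℂ) := by
  have hterm : ∀ i, ⇑(lam i x • indicatorConstLp p (hXm i) (hXtop i)
      (indicatorScale μ p (X i) : ℂ))
        =ᵐ[μ] lam i x • (X i).indicator fun _ => (indicatorScale μ p (X i) : ℂ) := fun i =>
    (Lp.coeFn_smul _ _).trans (indicatorConstLp_coeFn.const_smul _)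
  simp only [indicatorSumCLM, _root_.sum_apply, ContinuousLinearMap.smulRight_apply]
  filter_upwards [Lp.coeFn_finsetSum Finset.univ fun i =>
      lam i x • indicatorConstLp p (hXm i) (hXtop i) (indicatorScale μ p (X i) : ℂ),
    ae_all_iff.2 hterm] with t hsum hterm_t
  simp only [hsum, Finset.sum_apply, hterm_t]

variable {hXm hXtop}

theorem enorm_indicatorSumCLM_rpow (hXd : Pairwise (Disjoint on X)) (hX0 : ∀ i, μ (X i) ≠ 0)
    (hp : p ≠ ∞) (x : E) :
    ‖indicatorSumCLM hXm hXtop p lam x‖ₑ ^ p.toReal = ∑ i, ‖lam i x‖ₑ ^ p.toReal := by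
  have hp0 : p ≠ 0 := (zero_lt_one.trans_le Fact.out).ne'
  have hsupp : ∀ i, support (lam i x • (X i).indicator fun _ => (indicatorScale μ p (X i) : ℂ))
      ⊆ X i := fun i => (support_const_smul_subset _ _).trans Set.support_indicator_subset
  rw [Lp.enorm_def, eLpNorm_congr_ae (coeFn_indicatorSumCLM hXm hXtop lam x),
    eLpNorm_sum_rpow_of_pairwise_disjoint_support hp0 hp
      (fun i => (aestronglyMeasurable_const.indicator (hXm i)).const_smul _)
      (fun i j hij => (hXd hij).mono (hsupp i) (hsupp j))]
  simp only [eLpNorm_const_smul, eLpNorm_indicator_indicatorScale (hXm _) (hX0 _) (hXtop _) hp0,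
    mul_one]

theorem integral_indicatorSumCLM_mul [p.HolderConjugate q] (hXd : Pairwise (Disjoint on X))
    (hX0 : ∀ i, μ (X i) ≠ 0) (x : E) (i : ι) :
    ∫ t, indicatorSumCLM hXm hXtop p lam x t *
      indicatorConstLp q (hXm i) (hXtop i) (indicatorScale μ q (X i) : ℂ) t ∂μ = lam i x := by
  have hprod : (fun t => indicatorSumCLM hXm hXtop p lam x t *
      indicatorConstLp q (hXm i) (hXtop i) (indicatorScale μ q (X i) : ℂ) t) =ᵐ[μ]
        (X i).indicator fun _ =>
          lam i x * indicatorScale μ p (X i) * indicatorScale μ q (X i) := by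
    filter_upwards [coeFn_indicatorSumCLM (p := p) hXm hXtop lam x,
      indicatorConstLp_coeFn (p := q) (hs := hXm i) (hμs := hXtop i)
        (c := (indicatorScale μ q (X i) : ℂ))]
      with t hT hφ
    rw [hT, hφ]
    by_cases ht : t ∈ X i
    · have hzero : ∀ j, j ≠ i → t ∉ X j := fun j hji htj => (hXd hji).le_bot ⟨htj, ht⟩
      rw [Finset.sum_apply, Finset.sum_eq_single_of_mem i (Finset.mem_univ i)
        fun j _ hji => by simp [Set.indicator_of_notMem (hzero j hji)]]
      simp [Set.indicator_of_mem ht, mul_assoc]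
    · simp [Set.indicator_of_notMem ht]
  rw [integral_congr_ae hprod, integral_indicator_const _ (hXm i), Complex.real_smul]
  have hscale : ((μ.real (X i) * indicatorScale μ p (X i) * indicatorScale μ q (X i) : ℝ) : ℂ)
      = 1 := by
    rw [measureReal_mul_indicatorScale_mul_indicatorScale (hX0 i) (hXtop i), Complex.ofReal_one]
  push_cast at hscale
  linear_combination lam i x * hscale

end IndicatorOperator

end MeasureTheory

section WeakSumming

variable {α : Type*} [MeasurableSpace α] {μ : Measure α} {p q : ℝ≥0∞} [Fact (1 ≤ p)]
  [p.HolderConjugate q] {n : ℕ} {lam : Fin n → StrongDual ℂ E}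

theorem muPN_le_one_of_eq_integral_mul (hp : p ≠ ∞) {T : E →L[ℂ] Lp ℂ p μ} (hT : ‖T‖ ≤ 1)
    {φ : Fin n → Lp ℂ q μ} (hφ : ∀ i, ‖φ i‖ ≤ 1)
    (hd : ∀ i j, i ≠ j → (fun t => φ i t * φ j t) =ᵐ[μ] 0)
    (hlam : ∀ i x, lam i x = ∫ t, T x t * φ i t ∂μ) :
    muPN p.toReal lam ≤ 1 := by
  have hp0 : p ≠ 0 := ENNReal.HolderConjugate.ne_zero p q
  rw [muPN_le_one_iff lam (ENNReal.toReal_pos hp0 hp)]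
  intro x
  rw [← sum_enorm_rpow_le_enorm_rpow_iff _ _ ENNReal.toReal_nonneg]
  have hφq : ∀ i, eLpNorm (φ i) q μ ≤ 1 := fun i =>
    (ENNReal.toReal_le_toReal (Lp.eLpNorm_ne_top _) ENNReal.one_ne_top).1 (hφ i)
  have hTx : ‖T x‖ₑ ≤ ‖x‖ₑ := enorm_le_iff_norm_le.2 <|
    (T.le_opNorm x).trans (mul_le_of_le_one_left (norm_nonneg x) hT)
  calc ∑ i, ‖lam i x‖ₑ ^ p.toReal = ∑ i, ‖∫ t, T x t * φ i t ∂μ‖ₑ ^ p.toReal := by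
        simp only [hlam]
    _ ≤ eLpNorm (T x) p μ ^ p.toReal :=
        sum_enorm_integral_mul_rpow_le hp (Lp.aestronglyMeasurable _)
          (fun i => Lp.aestronglyMeasurable _) hφq hd
    _ ≤ ‖x‖ₑ ^ p.toReal := by
        rw [← Lp.enorm_def]; gcongr

theorem exists_eq_integral_mul_of_muPN_le_one (hp : p ≠ ∞) {X : Fin n → Set α}
    (hXm : ∀ i, MeasurableSet (X i)) (hXd : Pairwise (Disjoint on X))
    (hX0 : ∀ i, μ (X i) ≠ 0) (hXtop : ∀ i, μ (X i) ≠ ∞) (hmu : muPN p.toReal lam ≤ 1) :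
    ∃ T : E →L[ℂ] Lp ℂ p μ, ‖T‖ ≤ 1 ∧ ∃ φ : Fin n → Lp ℂ q μ, (∀ i, ‖φ i‖ ≤ 1) ∧
      (∀ i j, i ≠ j → (fun t => φ i t * φ j t) =ᵐ[μ] 0) ∧
      ∀ i x, lam i x = ∫ t, T x t * φ i t ∂μ := by
  have hp0 : p ≠ 0 := ENNReal.HolderConjugate.ne_zero p q
  have hp_pos : 0 < p.toReal := ENNReal.toReal_pos hp0 hp
  have hlam : ∀ x, ∑ i, ‖lam i x‖ₑ ^ p.toReal ≤ ‖x‖ₑ ^ p.toReal := fun x =>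
    (sum_enorm_rpow_le_enorm_rpow_iff _ _ hp_pos.le).2 ((muPN_le_one_iff lam hp_pos).1 hmu x)
  have hφ : ∀ i, (indicatorConstLp q (hXm i) (hXtop i) (indicatorScale μ q (X i) : ℂ) : α → ℂ)
      =ᵐ[μ] (X i).indicator fun _ => (indicatorScale μ q (X i) : ℂ) := fun i =>
    indicatorConstLp_coeFn
  refine ⟨indicatorSumCLM hXm hXtop p lam, ?_,
    fun i => indicatorConstLp q (hXm i) (hXtop i) (indicatorScale μ q (X i) : ℂ), ?_, ?_,
    fun i x => (integral_indicatorSumCLM_mul lam hXd hX0 x i).symm⟩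
  · refine ContinuousLinearMap.opNorm_le_bound _ zero_le_one fun x => ?_
    rw [one_mul, ← enorm_le_iff_norm_le,
      ← ENNReal.rpow_le_rpow_iff hp_pos, enorm_indicatorSumCLM_rpow lam hXd hX0 hp]
    exact hlam x
  · intro i
    rw [Lp.norm_def, eLpNorm_congr_ae (hφ i),
      eLpNorm_indicator_indicatorScale (hXm i) (hX0 i) (hXtop i)
        (ENNReal.HolderConjugate.ne_zero q p), ENNReal.toReal_one]
  · intro i j hij
    filter_upwards [hφ i, hφ j] with t hi hj
    rw [hi, hj, Pi.zero_apply]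
    by_cases ht : t ∈ X i
    · rw [Set.indicator_of_notMem fun htj => (hXd hij).le_bot ⟨ht, htj⟩, mul_zero]
    · rw [Set.indicator_of_notMem ht, zero_mul]

end WeakSumming

theorem adjoint_tuples_eq_weak_summing_ball_general
    {α : Type*} [MeasurableSpace α] (μ : Measure α)
    (p p' : ℝ≥0∞) [Fact (1 ≤ p)] (hp : p ≠ ∞)
    (hconj : 1 / p + 1 / p' = 1)
    (hdim : ∀ m : ℕ, ∃ X : Fin m → Set α, (∀ i, MeasurableSet (X i)) ∧
      Pairwise (Function.onFun Disjoint X) ∧ ∀ i, 0 < μ (X i) ∧ μ (X i) < ∞)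
    (n : ℕ) :
    {lam : Fin n → StrongDual ℂ E | ∃ T : E →L[ℂ] Lp ℂ p μ, ‖T‖ ≤ 1 ∧
        ∃ φ : Fin n → Lp ℂ p' μ, (∀ i, ‖φ i‖ ≤ 1) ∧
          (∀ i j, i ≠ j → (fun t => (φ i : α → ℂ) t * (φ j : α → ℂ) t) =ᵐ[μ] 0) ∧
          ∀ (i : Fin n) (x : E), lam i x = ∫ t, (T x : α → ℂ) t * (φ i : α → ℂ) t ∂μ}
      = {lam : Fin n → StrongDual ℂ E | muPN p.toReal lam ≤ 1} := by
  have : p.HolderConjugate p' := ENNReal.holderConjugate_iff.2 (by simpa only [one_div] using hconj)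
  ext lam
  constructor
  · rintro ⟨T, hT, φ, hφ, hd, hlam⟩
    exact muPN_le_one_of_eq_integral_mul hp hT hφ hd hlam
  · intro hmu
    obtain ⟨X, hXm, hXd, hXμ⟩ := hdim n
    exact exists_eq_integral_mul_of_muPN_le_one hp hXm hXd (fun i => (hXμ i).1.ne')
      (fun i => (hXμ i).2.ne) hmu

/-- let `E` be a complex Banach space, `p ∈ [1,∞)` with conjugate index
`p'`, and `(Ω,μ)` a measure space with `L^p(Ω)` infinite-dimensional. Then for each `n`,
the set `Bₙ` of tuples `(T'φ₁,…,T'φₙ)`, where `T ∈ B(E, L^p(Ω))_{[1]}` and the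
`φᵢ ∈ L^{p'}(Ω)_{[1]}` have pairwise disjoint supports, coincides with the set of tuples
`(λ₁,…,λₙ) ∈ (E')ⁿ` with `μ_{p,n}(λ) ≤ 1`. -/
theorem adjoint_tuples_eq_weak_summing_ball
    [CompleteSpace E]
    {α : Type*} [MeasurableSpace α] (μ : Measure α)
    (p p' : ℝ≥0∞) [Fact (1 ≤ p)] [Fact (1 ≤ p')] (hp : p ≠ ∞)
    (hconj : 1 / p + 1 / p' = 1)
    (hdim : ∀ m : ℕ, ∃ X : Fin m → Set α, (∀ i, MeasurableSet (X i)) ∧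
      Pairwise (Function.onFun Disjoint X) ∧ ∀ i, 0 < μ (X i) ∧ μ (X i) < ∞)
    (n : ℕ) :
    {lam : Fin n → StrongDual ℂ E | ∃ T : E →L[ℂ] Lp ℂ p μ, ‖T‖ ≤ 1 ∧
        ∃ φ : Fin n → Lp ℂ p' μ, (∀ i, ‖φ i‖ ≤ 1) ∧
          (∀ i j, i ≠ j → (fun t => (φ i : α → ℂ) t * (φ j : α → ℂ) t) =ᵐ[μ] 0) ∧
          ∀ (i : Fin n) (x : E), lam i x = ∫ t, (T x : α → ℂ) t * (φ i : α → ℂ) t ∂μ}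
      = {lam : Fin n → StrongDual ℂ E | muPN p.toReal lam ≤ 1} :=
  adjoint_tuples_eq_weak_summing_ball_general μ p p' hp hconj hdim n
end

section
/- Let (Ω,μ) be a measure space, let p ∈ (1,∞), let n ∈ ℕ, and let F : {1,…,n} × {1,…,n} → L^p(Ω) be a function. Set C = max{(Σ_{j=1}^{n} ‖Σ_{i=1}^{n} dᵢ F(i,j)‖_p^p)^{1/p} : (d₁,…,dₙ) ∈ {−1,1}ⁿ}. Then Σ_{j=1}^{n} ‖F(j,j)‖_p^p ≤ C^p. -/
open MeasureTheory
open scoped ENNReal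

/-- let `(Ω,μ)` be a measure space, `p ∈ (1,∞)`, and
`F : {1,…,n} × {1,…,n} → L^p(Ω)`. If `C` bounds
`(Σⱼ ‖Σᵢ dᵢ F(i,j)‖_p^p)^{1/p}` over all choices of signs `d ∈ {−1,1}ⁿ`,
then `Σⱼ ‖F(j,j)‖_p^p ≤ C^p`. -/
theorem sign_average_estimate
    {α : Type*} [MeasurableSpace α] (μ : Measure α)
    (p : ℝ) (hp : 1 < p) [Fact (1 ≤ ENNReal.ofReal p)] (n : ℕ)
    (F : Fin n → Fin n → Lp ℂ (ENNReal.ofReal p) μ) (C : ℝ)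
    (hC : ∀ d : Fin n → ℝ, (∀ i, d i = 1 ∨ d i = -1) →
      (∑ j, ‖∑ i, d i • F i j‖ ^ p) ^ (1 / p) ≤ C) :
    ∑ j, ‖F j j‖ ^ p ≤ C ^ p := by
  have hp0 : (0:ℝ) < p := lt_trans one_pos hp
  set d : (Fin n → Bool) → Fin n → ℝ := fun s i => if s i then 1 else -1 with hd_def
  have hd : ∀ s i, d s i = 1 ∨ d s i = -1 := by
    intro s i; by_cases h : s i <;> simp [hd_def, h]
  set S : (Fin n → Bool) → ℝ := fun s => ∑ j, ‖∑ i, d s i • F i j‖ ^ p with hS_def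
  have hSnn : ∀ s, 0 ≤ S s := fun s =>
    Finset.sum_nonneg fun j _ => Real.rpow_nonneg (norm_nonneg _) p
  have hC0 : 0 ≤ C :=
    le_trans (Real.rpow_nonneg (hSnn fun _ => true) _) (hC _ (hd fun _ => true))
  have hSC : ∀ s, S s ≤ C ^ p := by
    intro s
    have h := hC (d s) (hd s)
    calc S s = ((S s) ^ (1/p)) ^ p := by
          rw [← Real.rpow_mul (hSnn s), one_div, inv_mul_cancel₀ hp0.ne', Real.rpow_one]
      _ ≤ C ^ p := Real.rpow_le_rpow (Real.rpow_nonneg (hSnn s) _) h hp0.le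
  -- per-j averaging
  have key : ∀ j : Fin n, (2:ℝ)^n * ‖F j j‖ ^ p ≤ ∑ s : Fin n → Bool, ‖∑ i, d s i • F i j‖ ^ p := by
    intro j
    set g : (Fin n → Bool) → ℝ := fun s => ‖∑ i, d s i • F i j‖ ^ p with hg_def
    set fl : (Fin n → Bool) → (Fin n → Bool) := fun s => Function.update s j (!(s j)) with hfl_def
    have hinv : Function.Involutive fl := by
      intro s; funext i
      by_cases h : i = j
      · subst h; simp [hfl_def]
      · simp [hfl_def, Function.update_of_ne h]
    have pair : ∀ s, 2 * ‖F j j‖ ^ p ≤ g s + g (fl s) := by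
      intro s
      set A := ∑ i, d s i • F i j with hA
      set B := ∑ i, d (fl s) i • F i j with hB
      have hAB : A - B = (2 * d s j) • F j j := by
        rw [hA, hB, ← Finset.sum_sub_distrib]
        rw [Finset.sum_eq_single j]
        · have : d (fl s) j = - d s j := by
            by_cases h : s j <;> simp [hd_def, hfl_def, h]
          rw [← sub_smul, this, sub_neg_eq_add, two_mul]
        · intro i _ hij
          have : d (fl s) i = d s i := by
            simp [hd_def, hfl_def, Function.update_of_ne hij]
          rw [this, sub_self]
        · intro h; exact absurd (Finset.mem_univ j) h
      have hnorm : ‖A - B‖ = 2 * ‖F j j‖ := by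
        rw [hAB, norm_smul]
        rcases hd s j with h | h <;> simp [h]
      have h1 : 2 * ‖F j j‖ ≤ ‖A‖ + ‖B‖ := hnorm ▸ norm_sub_le A B
      have h2 : ‖F j j‖ ^ p ≤ ((‖A‖ + ‖B‖)/2) ^ p := by
        apply Real.rpow_le_rpow (norm_nonneg _) _ hp0.le
        linarith
      have h3 : ((‖A‖ + ‖B‖)/2) ^ p ≤ (‖A‖ ^ p + ‖B‖ ^ p)/2 := by
        have := (convexOn_rpow hp.le).2 (Set.mem_Ici.2 (norm_nonneg A))
          (Set.mem_Ici.2 (norm_nonneg B)) (by norm_num : (0:ℝ) ≤ 1/2)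
          (by norm_num : (0:ℝ) ≤ 1/2) (by norm_num)
        simp only [smul_eq_mul] at this
        calc ((‖A‖ + ‖B‖)/2) ^ p = (1/2 * ‖A‖ + 1/2 * ‖B‖) ^ p := by ring_nf
          _ ≤ 1/2 * ‖A‖ ^ p + 1/2 * ‖B‖ ^ p := this
          _ = (‖A‖ ^ p + ‖B‖ ^ p)/2 := by ring
      have : ‖F j j‖ ^ p ≤ (g s + g (fl s))/2 := le_trans h2 (le_trans h3 (by rfl))
      linarith
    have hflsum : ∑ s : Fin n → Bool, g (fl s) = ∑ s : Fin n → Bool, g s :=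
      Function.Bijective.sum_comp hinv.bijective g
    have : ∑ s : Fin n → Bool, (2 * ‖F j j‖ ^ p) ≤ ∑ s : Fin n → Bool, (g s + g (fl s)) :=
      Finset.sum_le_sum fun s _ => pair s
    rw [Finset.sum_add_distrib, hflsum, Finset.sum_const] at this
    have hcard : (Fintype.card (Fin n → Bool) : ℝ) = 2^n := by
      simp [Fintype.card_fun]
    simp only [Finset.card_univ, nsmul_eq_mul] at this
    rw [hcard] at this
    nlinarith [Real.rpow_nonneg (norm_nonneg (F j j)) p]
  have h2n : (0:ℝ) < 2^n := by positivity
  have main : (2:ℝ)^n * ∑ j, ‖F j j‖ ^ p ≤ (2:ℝ)^n * C ^ p := by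
    calc (2:ℝ)^n * ∑ j, ‖F j j‖ ^ p = ∑ j, (2:ℝ)^n * ‖F j j‖ ^ p := Finset.mul_sum _ _ _
      _ ≤ ∑ j, ∑ s : Fin n → Bool, ‖∑ i, d s i • F i j‖ ^ p :=
          Finset.sum_le_sum fun j _ => key j
      _ = ∑ s : Fin n → Bool, S s := Finset.sum_comm
      _ ≤ ∑ _s : Fin n → Bool, C ^ p := Finset.sum_le_sum fun s _ => hSC s
      _ = (2:ℝ)^n * C ^ p := by
          rw [Finset.sum_const, Finset.card_univ, nsmul_eq_mul]
          simp [Fintype.card_fun]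
  exact le_of_mul_le_mul_left main h2n
end
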